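/- arXiv:1812.03765 — 11 statements merged into one kernel-verified Lean document; each statement's English description precedes it below -/
import Mathlib

section
/- Let T be a finite tree, let v1 be a vertex in the median of T, and let v1, v2, ..., vr be a path in T (a sequence of distinct vertices in which consecutive vertices are adjacent) such that v2 is not in the median of T. Then s(v1) < s(v2) < ... < s(vr). -/
/-- The status (transmission index) of a vertex: the sum of distances to all vertices. -/
noncomputable def SimpleGraph.status {V : Type*} [Fintype V] (G : SimpleGraph V) (v : V) : ℕ :=
  ∑ u : V, G.dist v u

/-- A vertex is in the median if it has minimum status. -/
def SimpleGraph.InMedian {V : Type*} [Fintype V] (G : SimpleGraph V) (v : V) : Prop :=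
  ∀ u : V, G.status v ≤ G.status u

/-!
Crossing an edge `ab` of a tree changes the distance to every vertex by exactly one, so
`s(b) - s(a) = #{w closer to a} - #{w closer to b}`. Along a path `a, b, c` the vertices closer
to `a` than to `b` are also closer to `b` than to `c` (the geodesic from such a vertex to `c`
passes through `a` and `b`), and symmetrically. Hence the increments of the status are
nondecreasing along a path, i.e. the status is convex there; since the first increment
`s(v₂) - s(v₁)` is positive when `v₁` is a median vertex and `v₂` is not, all of them are.
-/

open Finset

namespace SimpleGraph

variable {V : Type*} {G : SimpleGraph V}

lemma IsAcyclic.eq_penultimate_of_dist_eq_add_one (hG : G.IsAcyclic) {x a b : V}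
    (hab : G.Adj a b) (h : G.dist x b = G.dist x a + 1) {p : G.Walk x b} (hp : p.IsPath) :
    a = p.penultimate := by
  classical
  have hxa : G.Reachable x a :=
    (Reachable.of_dist_ne_zero (by omega : G.dist x b ≠ 0)).trans hab.symm.reachable
  obtain ⟨q, hq, hql⟩ := hxa.exists_path_of_dist
  have hb : b ∉ q.support := fun hb => by
    have := (dist_le (q.takeUntil b hb)).trans (q.length_takeUntil_le_length hb)
    omega
  exact hG.eq_penultimate_of_adj_end hp hab.symm
    (hG.mem_support_of_ne_mem_support_of_adj_of_isPath hp hq hab.symm hb)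

lemma IsAcyclic.eq_of_dist_eq_add_one (hG : G.IsAcyclic) {x a b c : V}
    (hab : G.Adj a b) (hcb : G.Adj c b)
    (ha : G.dist x b = G.dist x a + 1) (hc : G.dist x b = G.dist x c + 1) : a = c := by
  obtain ⟨p, hp, -⟩ :=
    (Reachable.of_dist_ne_zero (by omega : G.dist x b ≠ 0)).exists_path_of_dist
  rw [hG.eq_penultimate_of_dist_eq_add_one hab ha hp,
    hG.eq_penultimate_of_dist_eq_add_one hcb hc hp]

variable [Fintype V]

noncomputable def closerFinset (G : SimpleGraph V) (a b : V) : Finset V :=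
  {w | G.dist a w < G.dist b w}

lemma mem_closerFinset {a b w : V} : w ∈ G.closerFinset a b ↔ G.dist a w < G.dist b w := by
  simp [closerFinset]

lemma IsTree.status_add_card_closerFinset (hT : G.IsTree) {a b : V} (hab : G.Adj a b) :
    G.status b + #(G.closerFinset b a) = G.status a + #(G.closerFinset a b) := by
  simp only [status, closerFinset, card_filter, ← sum_add_distrib]
  refine sum_congr rfl fun w _ => ?_
  have := hT.dist_eq_dist_add_one_of_adj w hab
  rw [dist_comm, dist_comm (u := w)] at this
  split_ifs <;> omega

lemma IsTree.closerFinset_subset (hT : G.IsTree) {a b c : V}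
    (hab : G.Adj a b) (hbc : G.Adj b c) (hac : a ≠ c) :
    G.closerFinset a b ⊆ G.closerFinset b c := by
  intro w hw
  rw [mem_closerFinset, dist_comm (u := a), dist_comm (u := b)] at hw
  rw [mem_closerFinset, dist_comm (u := b), dist_comm (u := c)]
  rcases hT.dist_eq_dist_add_one_of_adj w hab with h | h
  · omega
  rcases hT.dist_eq_dist_add_one_of_adj w hbc with h' | h'
  · exact absurd (hT.isAcyclic.eq_of_dist_eq_add_one hab hbc.symm h h') hac
  · omega

lemma IsTree.status_add_status_le (hT : G.IsTree) {a b c : V}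
    (hab : G.Adj a b) (hbc : G.Adj b c) (hac : a ≠ c) :
    G.status b + G.status b ≤ G.status a + G.status c := by
  have hA := card_le_card (hT.closerFinset_subset hab hbc hac)
  have hB := card_le_card (hT.closerFinset_subset hbc.symm hab.symm hac.symm)
  have := hT.status_add_card_closerFinset hab
  have := hT.status_add_card_closerFinset hbc
  omega

end SimpleGraph

/-- If `v₁` is in the median of a tree `T`, and `v₁, v₂, …, v_r` is a path in `T`
(distinct vertices, consecutive ones adjacent) such that `v₂` is not in the median,
then `s(v₁) < s(v₂) < ⋯ < s(v_r)`. -/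
theorem status_strictMono_on_path_from_median {V : Type*} [Fintype V]
    (G : SimpleGraph V) (hT : G.IsTree)
    (r : ℕ) (hr : 2 ≤ r) (p : Fin r → V) (hinj : Function.Injective p)
    (hadj : ∀ i : Fin r, ∀ h : (i : ℕ) + 1 < r, G.Adj (p i) (p ⟨(i : ℕ) + 1, h⟩))
    (h₁ : G.InMedian (p ⟨0, by omega⟩))
    (h₂ : ¬ G.InMedian (p ⟨1, by omega⟩)) :
    StrictMono (fun i : Fin r => G.status (p i)) := by
  obtain ⟨m, rfl⟩ : ∃ m, r = m + 1 := ⟨r - 1, by omega⟩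
  have hconvex : ∀ i (h : i + 1 + 1 < m + 1),
      G.status (p ⟨i + 1, by omega⟩) + G.status (p ⟨i + 1, by omega⟩)
        ≤ G.status (p ⟨i, by omega⟩) + G.status (p ⟨i + 1 + 1, h⟩) := fun i h =>
    hT.status_add_status_le (hadj ⟨i, by omega⟩ (Nat.lt_of_succ_lt h))
      (hadj ⟨i + 1, by omega⟩ h)
      (hinj.ne (Fin.ne_of_val_ne (by dsimp only; omega)))
  rw [Fin.strictMono_iff_lt_succ]
  rintro ⟨i, hi⟩
  simp only [Fin.castSucc_mk, Fin.succ_mk]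
  induction i with
  | zero => exact (h₁ _).lt_of_ne fun h => h₂ fun u => h ▸ h₁ u
  | succ i ih =>
    have := ih (by omega)
    have := hconvex i (by omega)
    omega
end

section
/- Status injective trees are status unique in trees: if T is a finite tree all of whose vertices have pairwise distinct statuses, and T' is a finite tree whose status sequence (multiset of statuses) equals that of T, then T' is isomorphic to T. -/
/-- The status sequence of a finite graph: the multiset of statuses of its vertices. -/
noncomputable def SimpleGraph.statusSequence {V : Type*} [Fintype V] (G : SimpleGraph V) :
    Multiset ℕ :=
  Finset.univ.val.map G.status

/-!
Across an edge `uv` of a tree on `n` vertices the status changes by `s(v) - s(u) = n - 2 n_v`,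
where `n_v` counts the vertices closer to `v` than to `u`. These counts grow along a path, so the
status is strictly convex along paths: when it is injective, every vertex other than the minimum
has exactly one neighbour of smaller status, its parent. Going down through the statuses, the branch
at `v` is `v` together with the branches at its children, which have larger status, and then
`s(parent v) = s(v) - n + 2 n_v` determines the parent by injectivity. So the status function
determines an injective tree, and a tree with the same status sequence, relabelled by status,
has the same status function.
-/

open Finset

namespace SimpleGraph

variable {V W : Type*} {G : SimpleGraph V} {G' : SimpleGraph W} {a b c u v x y : V}

theorem Hom.edist_le (f : G →g G') (u v : V) : G'.edist (f u) (f v) ≤ G.edist u v :=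
  le_iInf fun p => (SimpleGraph.edist_le (p.map f)).trans_eq (by rw [Walk.length_map])

theorem Iso.edist_apply (f : G ≃g G') (u v : V) : G'.edist (f u) (f v) = G.edist u v :=
  le_antisymm (f.toHom.edist_le u v) (by simpa using f.symm.toHom.edist_le (f u) (f v))

theorem Iso.status_apply [Fintype V] [Fintype W] (f : G ≃g G') (v : V) :
    G'.status (f v) = G.status v := by
  rw [status, status, ← f.toEquiv.sum_comp]
  simp [dist, f.edist_apply]

theorem mem_statusSequence [Fintype V] {k : ℕ} :
    k ∈ G.statusSequence ↔ k ∈ Set.range G.status := by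
  simp [statusSequence]

theorem statusSequence_nodup_iff [Fintype V] :
    G.statusSequence.Nodup ↔ Function.Injective G.status := by
  simp [statusSequence, Multiset.nodup_map_iff_inj_on univ.nodup, Function.Injective]

theorem Connected.exists_adj_dist_add_one (hG : G.Connected) (hxy : x ≠ y) :
    ∃ c, G.Adj x c ∧ G.dist y c + 1 = G.dist y x := by
  obtain ⟨p, hp⟩ := hG.exists_walk_length_eq_dist x y
  obtain ⟨c, h, q, rfl⟩ := Walk.exists_eq_cons_of_ne hxy p
  obtain ⟨r, hr⟩ := hG.exists_walk_length_eq_dist c y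
  have hq := dist_le q
  have hcr := dist_le (r.cons h)
  rw [Walk.length_cons] at hp hcr
  refine ⟨c, h, ?_⟩
  rw [dist_comm (u := y), dist_comm (u := y)]
  omega

theorem IsTree.eq_of_adj_of_dist_add_one (hG : G.IsTree) {c₁ c₂ : V} (h₁ : G.Adj x c₁)
    (h₂ : G.Adj x c₂) (hd₁ : G.dist y c₁ + 1 = G.dist y x)
    (hd₂ : G.dist y c₂ + 1 = G.dist y x) : c₁ = c₂ := by
  have geodesic {c : V} (h : G.Adj x c) (hd : G.dist y c + 1 = G.dist y x) :
      ∃ p : G.Walk c y, (p.cons h).IsPath := by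
    obtain ⟨p, hp⟩ := hG.connected.exists_walk_length_eq_dist c y
    refine ⟨p, Walk.isPath_of_length_eq_dist _ ?_⟩
    rw [Walk.length_cons, hp, dist_comm, hd, dist_comm]
  obtain ⟨p₁, hp₁⟩ := geodesic h₁ hd₁
  obtain ⟨p₂, hp₂⟩ := geodesic h₂ hd₂
  simpa using congrArg Walk.snd ((hG.existsUnique_path x y).unique hp₁ hp₂)

section Closer

variable [Fintype V]

-- For an edge `uv` of a tree, the vertex set of the component of `u` in `G - uv`.
noncomputable def closer (G : SimpleGraph V) (u v : V) : Finset V :=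
  {x | G.dist x u < G.dist x v}

@[simp]
theorem mem_closer : x ∈ G.closer u v ↔ G.dist x u < G.dist x v := by
  simp [closer]

theorem IsTree.card_closer_add_card_closer (hG : G.IsTree) (h : G.Adj u v) :
    #(G.closer u v) + #(G.closer v u) = Fintype.card V := by
  rw [← card_univ,
    ← card_filter_add_card_filter_not (s := univ) fun x => G.dist x u < G.dist x v]
  congr 2
  ext x
  have := hG.dist_eq_dist_add_one_of_adj x h
  simp only [mem_closer, mem_filter, mem_univ, true_and]
  omega

theorem IsTree.status_add_card_closer (hG : G.IsTree) (h : G.Adj u v) :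
    G.status v + #(G.closer v u) = G.status u + #(G.closer u v) := by
  simp only [status, closer, card_filter, ← sum_add_distrib]
  refine sum_congr rfl fun x _ => ?_
  have := hG.dist_eq_dist_add_one_of_adj x h
  rw [dist_comm (u := u), dist_comm (u := v)]
  split_ifs <;> omega

theorem IsTree.status_add_two_mul_card_closer (hG : G.IsTree) (h : G.Adj u v) :
    G.status v + 2 * #(G.closer v u) = G.status u + Fintype.card V := by
  have := hG.status_add_card_closer h
  have := hG.card_closer_add_card_closer h
  omega

theorem IsTree.closer_subset_closer (hG : G.IsTree) (h₁ : G.Adj c a) (h₂ : G.Adj a b)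
    (hcb : c ≠ b) : G.closer c a ⊆ G.closer a b := by
  intro x hx
  rw [mem_closer] at hx ⊢
  have hca := hG.dist_eq_dist_add_one_of_adj x h₁
  rcases hG.dist_eq_dist_add_one_of_adj x h₂ with hab | hab
  · exact absurd (hG.eq_of_adj_of_dist_add_one h₁.symm h₂ (by omega) hab.symm) hcb
  · omega

theorem IsTree.two_mul_status_lt (hG : G.IsTree) (h₁ : G.Adj c a) (h₂ : G.Adj a b)
    (hcb : c ≠ b) : 2 * G.status a < G.status c + G.status b := by
  have hlt : #(G.closer b a) < #(G.closer a c) := by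
    refine card_lt_card ((ssubset_iff_of_subset
      (hG.closer_subset_closer h₂.symm h₁.symm hcb.symm)).mpr ⟨a, ?_, ?_⟩)
    · simp [dist_eq_one_iff_adj.mpr h₁.symm]
    · simp
  have := hG.status_add_two_mul_card_closer h₁
  have := hG.status_add_two_mul_card_closer h₂
  omega

theorem IsTree.eq_of_adj_of_status_lt (hG : G.IsTree) (h₁ : G.Adj y u) (h₂ : G.Adj y v)
    (hu : G.status u < G.status y) (hv : G.status v < G.status y) : u = v := by
  by_contra hne
  have := hG.two_mul_status_lt h₁.symm h₂ hne
  omega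

theorem IsTree.status_le_of_isPath (hG : G.IsTree) (h : G.Adj c a) (p : G.Walk a b)
    (hp : (p.cons h).IsPath) (hs : G.status c ≤ G.status a) : G.status a ≤ G.status b := by
  induction p generalizing c with
  | nil => exact le_rfl
  | @cons a a' b h' q ih =>
    rw [Walk.cons_isPath_iff] at hp
    have hca' : c ≠ a' := fun e => hp.2 (by simp [e])
    have := hG.two_mul_status_lt h h' hca'
    exact (by omega : G.status a ≤ G.status a').trans (ih h' hp.1 (by omega))

theorem IsTree.exists_adj_status_lt (hG : G.IsTree) (hxy : G.status x < G.status y) :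
    ∃ u, G.Adj y u ∧ G.status u < G.status y := by
  obtain ⟨p, hp, -⟩ := hG.existsUnique_path y x
  obtain ⟨u, h, q, rfl⟩ := Walk.exists_eq_cons_of_ne (ne_of_apply_ne G.status hxy.ne') p
  by_contra! hno
  have hyu := hno u h
  have := hG.status_le_of_isPath h q hp hyu
  omega

theorem IsTree.mem_closer_iff (hG : G.IsTree) (h : G.Adj y u) (hs : G.status u < G.status y) :
    x ∈ G.closer y u ↔
      x = y ∨ ∃ c, G.Adj c y ∧ G.status y < G.status c ∧ x ∈ G.closer c y := by
  constructor
  · intro hx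
    rcases eq_or_ne x y with rfl | hxy
    · exact Or.inl rfl
    obtain ⟨c, hc, hd⟩ := hG.connected.exists_adj_dist_add_one hxy.symm
    rw [mem_closer] at hx
    have hcu : c ≠ u := by rintro rfl; omega
    have := hG.two_mul_status_lt hc.symm h hcu
    exact Or.inr ⟨c, hc.symm, by omega, by rw [mem_closer]; omega⟩
  · rintro (rfl | ⟨c, hc, hsc, hx⟩)
    · simp [dist_eq_one_iff_adj.mpr h]
    · exact hG.closer_subset_closer hc h (by rintro rfl; omega) hx

-- Downward induction on the status: the branch at `y` is built from the branches above it.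
theorem IsTree.adj_iff_and_closer_eq_of_status_eq {H : SimpleGraph V} (hG : G.IsTree)
    (hH : H.IsTree) (hinj : Function.Injective G.status) (hs : H.status = G.status)
    (hu : G.status u < G.status y) :
    (G.Adj y u ↔ H.Adj y u) ∧ (G.Adj y u → G.closer y u = H.closer y u) := by
  obtain ⟨B, hB⟩ := Finite.exists_le G.status
  induction y using (InvImage.wf (B - G.status ·) wellFounded_lt).induction generalizing u with
  | h y ih =>
  have ih' {c : V} (hc : G.status y < G.status c) :
      (G.Adj c y ↔ H.Adj c y) ∧ (G.Adj c y → G.closer c y = H.closer c y) :=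
    ih c (by have := hB c; simp only [InvImage]; omega) hc
  obtain ⟨uG, hGy, hGs⟩ := hG.exists_adj_status_lt hu
  obtain ⟨uH, hHy, hHs⟩ := hH.exists_adj_status_lt (x := u) (by rwa [hs])
  rw [hs] at hHs
  have hcloser : G.closer y uG = H.closer y uH := by
    ext x
    rw [hG.mem_closer_iff hGy hGs, hH.mem_closer_iff hHy (by rwa [hs]), hs]
    refine or_congr_right (exists_congr fun c => ?_)
    constructor
    · rintro ⟨hc, hsc, hx⟩
      exact ⟨(ih' hsc).1.mp hc, hsc, (ih' hsc).2 hc ▸ hx⟩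
    · rintro ⟨hc, hsc, hx⟩
      have hc' := (ih' hsc).1.mpr hc
      exact ⟨hc', hsc, (ih' hsc).2 hc' ▸ hx⟩
  have huGH : uG = uH := hinj <| by
    have := hG.status_add_two_mul_card_closer hGy.symm
    have := hH.status_add_two_mul_card_closer hHy.symm
    rw [hs, ← hcloser] at this
    omega
  subst huGH
  have hG' : G.Adj y u ↔ u = uG :=
    ⟨fun h => hG.eq_of_adj_of_status_lt h hGy hu hGs, (· ▸ hGy)⟩
  have hH' : H.Adj y u ↔ u = uG :=
    ⟨fun h => hH.eq_of_adj_of_status_lt h hHy (by rwa [hs]) (by rwa [hs]), (· ▸ hHy)⟩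
  rw [hG', hH']
  exact ⟨Iff.rfl, fun e => e ▸ hcloser⟩

theorem IsTree.eq_of_status_eq {H : SimpleGraph V} (hG : G.IsTree) (hH : H.IsTree)
    (hinj : Function.Injective G.status) (hs : H.status = G.status) : H = G := by
  ext x y
  rcases lt_trichotomy (G.status x) (G.status y) with hxy | hxy | hxy
  · rw [adj_comm, G.adj_comm]
    exact (hG.adj_iff_and_closer_eq_of_status_eq hH hinj hs hxy).1.symm
  · simp [hinj hxy]
  · exact (hG.adj_iff_and_closer_eq_of_status_eq hH hinj hs hxy).1.symm

end Closer

end SimpleGraph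

/-- Status injective trees are status unique in trees: if `T` is a finite tree whose vertices
have pairwise distinct statuses and `T'` is a finite tree with the same status sequence
(multiset of statuses), then `T'` is isomorphic to `T`. -/
theorem status_injective_tree_status_unique {V V' : Type*} [Fintype V] [Fintype V']
    (T : SimpleGraph V) (T' : SimpleGraph V')
    (hT : T.IsTree) (hT' : T'.IsTree)
    (hinj : Function.Injective T.status)
    (hseq : T'.statusSequence = T.statusSequence) :
    Nonempty (T' ≃g T) := by
  have hinj' : Function.Injective T'.status := by
    rw [← SimpleGraph.statusSequence_nodup_iff, hseq, SimpleGraph.statusSequence_nodup_iff]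
    exact hinj
  have hrange : Set.range T'.status = Set.range T.status :=
    Set.ext fun k => by
      rw [← SimpleGraph.mem_statusSequence, ← SimpleGraph.mem_statusSequence, hseq]
  let e : V' ≃ V := (Equiv.ofInjective _ hinj').trans
    ((Equiv.setCongr hrange).trans (Equiv.ofInjective _ hinj).symm)
  have he (b : V') : T.status (e b) = T'.status b := by simp [e, Equiv.apply_ofInjective_symm]
  let φ := SimpleGraph.Iso.map e T'
  have hmap : T'.map e = T := hT.eq_of_status_eq (φ.isTree_iff.mp hT') hinj <| funext fun a => by
    obtain ⟨b, rfl⟩ := e.surjective a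
    exact (φ.status_apply b).trans (he b).symm
  exact ⟨hmap ▸ φ⟩
end

section
/- For every finite tree T, the number k(T) of distinct status values among the vertices of T satisfies k(T) ≥ ⌈(diam(T) + 1)/2⌉, where diam(T) is the diameter of T. -/
/-- `k(G)`: the number of distinct status values among the vertices of `G`. -/
noncomputable def SimpleGraph.numStatusValues {V : Type*} [Fintype V] (G : SimpleGraph V) : ℕ :=
  (Finset.univ.image G.status).card

/-! Along a diametral path `v₀ … v_d` of a tree on `n` vertices, `s(vᵢ₊₁) - s(vᵢ) = n - 2 nᵢ`,
where `nᵢ` counts the vertices closer to `vᵢ₊₁` than to `vᵢ`. These vertex sets shrink strictly as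
`i` grows, so `i ↦ s(vᵢ)` has strictly increasing differences: it strictly decreases up to some
index and strictly increases afterwards, and so takes at least `⌈(d + 1) / 2⌉` values. -/

open Finset

section StrictlyConvex

variable {α : Type*} [AddCommGroup α] [LinearOrder α] [IsOrderedAddMonoid α]

theorem div_two_le_card_image_range_of_sub_lt_sub {f : ℕ → α} {d : ℕ}
    (hf : ∀ i, i + 2 ≤ d → f (i + 1) - f i < f (i + 2) - f (i + 1)) :
    (d + 2) / 2 ≤ #((range (d + 1)).image f) := by
  have hΔ : StrictMonoOn (fun i => f (i + 1) - f i) (Set.Iio d) :=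
    strictMonoOn_of_lt_add_one Set.ordConnected_Iio fun i _ _ hi => hf i hi
  have hex : ∃ m, d ≤ m ∨ 0 ≤ f (m + 1) - f m := ⟨d, .inl le_rfl⟩
  set m := Nat.find hex
  have hmd : m ≤ d := Nat.find_min' hex (.inl le_rfl)
  have hanti : StrictAntiOn f (Set.Iic m) := by
    refine strictAntiOn_of_add_one_lt Set.ordConnected_Iic fun i _ _ hi => ?_
    exact sub_neg.1 (not_le.1 (not_or.1 (Nat.find_min hex (Nat.lt_of_succ_le hi))).2)
  have hmono : StrictMonoOn f (Set.Icc (m + 1) d) := by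
    refine strictMonoOn_of_lt_add_one Set.ordConnected_Icc fun i _ hi hi' => ?_
    rw [Set.mem_Icc] at hi hi'
    have hm : 0 ≤ f (m + 1) - f m := (Nat.find_spec hex).resolve_left (by omega)
    exact sub_pos.1 (hm.trans_lt (hΔ (show m < d by omega) (show i < d by omega) (by omega)))
  have hleft : #(Iic m) ≤ #((range (d + 1)).image f) := by
    rw [← card_image_of_injOn (by simpa using hanti.injOn)]
    exact card_le_card (image_subset_image fun i hi => by simp at hi ⊢; omega)
  have hright : #(Icc (m + 1) d) ≤ #((range (d + 1)).image f) := by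
    rw [← card_image_of_injOn (by simpa using hmono.injOn)]
    exact card_le_card (image_subset_image fun i hi => by simp at hi ⊢; omega)
  simp only [Nat.card_Iic, Nat.card_Icc] at hleft hright
  omega

end StrictlyConvex

namespace SimpleGraph

variable {V : Type*} {G : SimpleGraph V}

theorem IsAcyclic.eq_of_adj_of_dist_lt (hG : G.IsAcyclic) {a b w z : V} (ha : G.Adj a w)
    (hb : G.Adj b w) (hza : G.dist z a < G.dist z w) (hzb : G.dist z b < G.dist z w) : a = b := by
  have hreach : G.Reachable z w := Reachable.of_dist_ne_zero (by omega)
  obtain ⟨p, -, hp⟩ := (hreach.trans ha.symm.reachable).exists_path_of_dist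
  obtain ⟨q, -, hq⟩ := (hreach.trans hb.symm.reachable).exists_path_of_dist
  have hpw : (p.concat ha).length = G.dist z w := by
    have := ha.diff_dist_adj (u := z)
    rw [Walk.length_concat, hp]
    omega
  have hqw : (q.concat hb).length = G.dist z w := by
    have := hb.diff_dist_adj (u := z)
    rw [Walk.length_concat, hq]
    omega
  have hpq : p.concat ha = q.concat hb := congrArg Subtype.val <| (hG.subsingleton_path z w).elim
    ⟨_, (p.concat ha).isPath_of_length_eq_dist hpw⟩ ⟨_, (q.concat hb).isPath_of_length_eq_dist hqw⟩
  exact (Walk.concat_inj hpq).1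

variable [Fintype V]

noncomputable def closerTo (G : SimpleGraph V) (v u : V) : Finset V :=
  {z | G.dist z v < G.dist z u}

theorem IsTree.status_sub_status_of_adj (hG : G.IsTree) {u v : V} (h : G.Adj u v) :
    (G.status v : ℤ) - G.status u = Fintype.card V - 2 * #(G.closerTo v u) := by
  have hterm (z : V) : (G.dist v z : ℤ) - G.dist u z =
      1 - 2 * if G.dist z v < G.dist z u then 1 else 0 := by
    rw [dist_comm, dist_comm (u := u)]
    rcases hG.dist_eq_dist_add_one_of_adj z h with h' | h' <;> simp [h']
  calc (G.status v : ℤ) - G.status u = ∑ z, ((G.dist v z : ℤ) - G.dist u z) := by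
        simp [status, sum_sub_distrib]
    _ = ∑ z, (1 - 2 * if G.dist z v < G.dist z u then 1 else 0) := sum_congr rfl fun z _ => hterm z
    _ = Fintype.card V - 2 * #(G.closerTo v u) := by
        rw [sum_sub_distrib, ← mul_sum, sum_boole]
        simp [closerTo]

theorem IsAcyclic.closerTo_ssubset (hG : G.IsAcyclic) {a w b : V} (ha : G.Adj a w)
    (hb : G.Adj w b) (hab : a ≠ b) : G.closerTo b w ⊂ G.closerTo w a := by
  refine ssubset_iff_of_subset (fun z hz => ?_) |>.2 ⟨w, ?_, ?_⟩
  · simp only [closerTo, mem_filter, mem_univ, true_and] at hz ⊢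
    have hreach : G.Reachable z a := (Reachable.of_dist_ne_zero (by omega)).trans ha.symm.reachable
    have := hG.dist_ne_of_adj ha hreach
    have := mt (hG.eq_of_adj_of_dist_lt ha hb.symm · hz) hab
    omega
  · simp [closerTo, dist_eq_one_iff_adj.2 ha.symm]
  · simp [closerTo, dist_eq_one_iff_adj.2 hb]

end SimpleGraph

/-- For every finite tree `T`, the number of distinct status values satisfies
`k(T) ≥ ⌈(diam T + 1)/2⌉`.  (In natural number arithmetic, `⌈(d+1)/2⌉ = (d+2)/2`.) -/
theorem numStatusValues_ge_ceil_diam {V : Type*} [Fintype V]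
    (G : SimpleGraph V) (hT : G.IsTree) :
    (G.diam + 2) / 2 ≤ G.numStatusValues := by
  have : Nonempty V := hT.connected.nonempty
  obtain ⟨x, y, hxy⟩ := G.exists_dist_eq_diam
  obtain ⟨p, hp, hlen⟩ := hT.connected.exists_path_of_dist x y
  set f : ℕ → ℤ := fun i => G.status (p.getVert i)
  have hconvex (i : ℕ) (hi : i + 2 ≤ G.diam) : f (i + 1) - f i < f (i + 2) - f (i + 1) := by
    have h₁ := p.adj_getVert_succ (i := i) (by omega)
    have h₂ : G.Adj (p.getVert (i + 1)) (p.getVert (i + 2)) := p.adj_getVert_succ (by omega)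
    have hne : p.getVert i ≠ p.getVert (i + 2) := fun h => by
      have := hp.getVert_injOn (show i ≤ p.length by omega) (show i + 2 ≤ p.length by omega) h
      omega
    have := card_lt_card (hT.isAcyclic.closerTo_ssubset h₁ h₂ hne)
    simp only [f, hT.status_sub_status_of_adj h₁, hT.status_sub_status_of_adj h₂]
    omega
  calc (G.diam + 2) / 2 ≤ #((range (G.diam + 1)).image f) :=
        div_two_le_card_image_range_of_sub_lt_sub hconvex
    _ ≤ #((univ.image G.status).image ((↑) : ℕ → ℤ)) :=
        card_le_card (image_subset_iff.2 fun i _ => by simp [f])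
    _ ≤ G.numStatusValues := card_image_le
end

section
/- The lower bound k(T) ≥ ⌈(diam(T) + 1)/2⌉ is tight for paths: for the path P_n on n ≥ 1 vertices, the number of distinct status values satisfies k(P_n) = ⌈n/2⌉ = ⌈(diam(P_n) + 1)/2⌉. -/
lemma pathGraph_dist_le' {n : ℕ} (u v : Fin n) (h : u.val ≤ v.val) :
    (SimpleGraph.pathGraph n).dist u v ≤ v.val - u.val := by
  obtain ⟨k, hk⟩ : ∃ k, u.val + k = v.val := ⟨v.val - u.val, by omega⟩
  have : v.val - u.val = k := by omega
  rw [this]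
  clear this h
  induction k generalizing v with
  | zero =>
    have : u = v := Fin.ext (by omega)
    simp [this]
  | succ k ih =>
    have hw : u.val + k < n := by omega
    set w : Fin n := ⟨u.val + k, by omega⟩ with hwdef
    have hadj : (SimpleGraph.pathGraph n).Adj w v := by
      rw [SimpleGraph.pathGraph_adj]
      left
      simp [hwdef]; omega
    calc (SimpleGraph.pathGraph n).dist u v
        ≤ (SimpleGraph.pathGraph n).dist u w + (SimpleGraph.pathGraph n).dist w v := by
          have hc : (SimpleGraph.pathGraph n).Connected := by
            have : n = (n - 1) + 1 := by omega
            rw [this]; exact SimpleGraph.pathGraph_connected _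
          exact hc.dist_triangle
      _ ≤ k + 1 := by
          have h1 := ih w rfl
          have h2 : (SimpleGraph.pathGraph n).dist w v ≤ 1 := by
            have := SimpleGraph.dist_le hadj.toWalk
            simpa using this
          omega

lemma pathGraph_walk_le' {n : ℕ} {u v : Fin n} (p : (SimpleGraph.pathGraph n).Walk u v) :
    Nat.dist u.val v.val ≤ p.length := by
  induction p with
  | nil => simp [Nat.dist]
  | cons h q ih =>
    rename_i a b c
    rw [SimpleGraph.pathGraph_adj] at h
    have := Nat.dist.triangle_inequality a.val b.val c.val
    have hd : Nat.dist a.val b.val = 1 := by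
      simp only [Nat.dist] at *; omega
    simp only [SimpleGraph.Walk.length_cons]
    omega

lemma pathGraph_dist' {n : ℕ} (u v : Fin n) :
    (SimpleGraph.pathGraph n).dist u v = Nat.dist u.val v.val := by
  apply le_antisymm
  · rcases le_total u.val v.val with h | h
    · have := pathGraph_dist_le' u v h
      have hd : Nat.dist u.val v.val = v.val - u.val := by simp [Nat.dist]; omega
      omega
    · have := pathGraph_dist_le' v u h
      have hd : Nat.dist u.val v.val = u.val - v.val := by simp [Nat.dist]; omega
      rw [SimpleGraph.dist_comm]; omega
  · obtain ⟨p, hp⟩ := ((SimpleGraph.pathGraph_preconnected n) u v).exists_walk_length_eq_dist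
    rw [← hp]
    exact pathGraph_walk_le' p

lemma double_sum_dist' (n t : ℕ) (h : t ≤ n) :
    2 * (∑ i ∈ Finset.range (n + 1), Nat.dist t i) = t * (t + 1) + (n - t) * (n + 1 - t) := by
  induction n generalizing t with
  | zero =>
    interval_cases t
    simp [Nat.dist]
  | succ n ih =>
    rcases Nat.lt_or_ge t (n + 1) with ht | ht
    · rw [Finset.sum_range_succ]
      have ht' : t ≤ n := by omega
      have hd : Nat.dist t (n + 1) = n + 1 - t := by simp [Nat.dist]; omega
      rw [hd, Nat.mul_add, ih t ht']
      obtain ⟨d, hdd⟩ : ∃ d, n = t + d := ⟨n - t, by omega⟩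
      subst hdd
      have e1 : t + d - t = d := by omega
      have e2 : t + d + 1 - t = d + 1 := by omega
      rw [e1, e2, show t + d + 1 + 1 - t = d + 2 by omega]
      ring
    · have hteq : t = n + 1 := by omega
      subst hteq
      have hz : ∀ i ∈ Finset.range (n + 2), Nat.dist (n + 1) i = (n + 2) - 1 - i := by
        intro i hi
        simp only [Finset.mem_range] at hi
        simp [Nat.dist]; omega
      rw [Finset.sum_congr rfl hz, Finset.sum_range_reflect (fun i => i) (n + 2)]
      have h2 := Finset.sum_range_id_mul_two (n + 2)
      have h0 : n + 1 - (n + 1) = 0 := by omega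
      rw [h0, show n + 2 - 1 = n + 1 from rfl] at *
      nlinarith [h2]

lemma g_aux' (a e d : ℕ) (he : 1 ≤ e) (hd : a + e ≤ d) :
    (a + e) * ((a + e) + 1) + d * (d + 1) < a * (a + 1) + (d + e) * ((d + e) + 1) := by
  nlinarith

lemma F_symm' (n t : ℕ) (h : t < n) :
    (∑ i ∈ Finset.range n, Nat.dist t i) = ∑ i ∈ Finset.range n, Nat.dist (n - 1 - t) i := by
  obtain ⟨m, rfl⟩ : ∃ m, n = m + 1 := ⟨n - 1, by omega⟩
  have h1 := double_sum_dist' m t (by omega)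
  have h2 := double_sum_dist' m (m - t) (by omega)
  rw [show m - (m - t) = t by omega, show m + 1 - (m - t) = t + 1 by omega,
    show m - t + 1 = m + 1 - t by omega] at h2
  rw [show m + 1 - 1 - t = m - t by omega]
  omega

lemma F_strict_lt' (N : ℕ) {a b : ℕ} (hab : a < b) (hb : 2 * b ≤ N) :
    (∑ i ∈ Finset.range (N + 1), Nat.dist b i) < ∑ i ∈ Finset.range (N + 1), Nat.dist a i := by
  have ha2 := double_sum_dist' N a (by omega)
  have hb2 := double_sum_dist' N b (by omega)
  obtain ⟨e, d, rfl, hNd, he, hd⟩ : ∃ e d, b = a + e ∧ N = a + e + d ∧ 1 ≤ e ∧ a + e ≤ d :=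
    ⟨b - a, N - b, by omega, by omega, by omega, by omega⟩
  subst hNd
  rw [show a + e + d - a = e + d by omega, show a + e + d + 1 - a = (e + d) + 1 by omega] at ha2
  rw [show a + e + d - (a + e) = d by omega,
    show a + e + d + 1 - (a + e) = d + 1 by omega] at hb2
  have := g_aux' a e d he hd
  nlinarith

/-- For the path `P_n` on `n ≥ 1` vertices, `k(P_n) = ⌈n/2⌉ = ⌈(diam(P_n) + 1)/2⌉`,
so the lower bound `k(T) ≥ ⌈(diam T + 1)/2⌉` is tight for paths.
(In natural number arithmetic, `⌈n/2⌉ = (n+1)/2` and `⌈(d+1)/2⌉ = (d+2)/2`.) -/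
theorem numStatusValues_pathGraph (n : ℕ) (hn : 1 ≤ n) :
    (SimpleGraph.pathGraph n).numStatusValues = (n + 1) / 2 ∧
    (n + 1) / 2 = ((SimpleGraph.pathGraph n).diam + 2) / 2 := by
  haveI : Nonempty (Fin n) := ⟨⟨0, hn⟩⟩
  set F : ℕ → ℕ := fun t => ∑ i ∈ Finset.range n, Nat.dist t i with hF
  have hstat : ∀ v : Fin n, (SimpleGraph.pathGraph n).status v = F v.val := by
    intro v
    unfold SimpleGraph.status
    show _ = ∑ i ∈ Finset.range n, Nat.dist v.val i
    rw [← Fin.sum_univ_eq_sum_range (fun i => Nat.dist v.val i) n]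
    exact Finset.sum_congr rfl fun u _ => pathGraph_dist' v u
  set m := (n + 1) / 2 with hm
  have himg : Finset.univ.image (SimpleGraph.pathGraph n).status
      = (Finset.range n).image F := by
    ext x
    simp only [Finset.mem_image, Finset.mem_univ, true_and, Finset.mem_range]
    constructor
    · rintro ⟨v, rfl⟩
      exact ⟨v.val, v.isLt, (hstat v).symm⟩
    · rintro ⟨t, ht, rfl⟩
      exact ⟨⟨t, ht⟩, hstat ⟨t, ht⟩⟩
  have himg2 : (Finset.range n).image F = (Finset.range m).image F := by
    apply le_antisymm
    · intro x hx
      obtain ⟨t, ht, rfl⟩ := Finset.mem_image.mp hx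
      rw [Finset.mem_range] at ht
      rcases Nat.lt_or_ge t m with h | h
      · exact Finset.mem_image.mpr ⟨t, Finset.mem_range.mpr h, rfl⟩
      · refine Finset.mem_image.mpr ⟨n - 1 - t, Finset.mem_range.mpr (by omega), ?_⟩
        exact (F_symm' n t ht).symm
    · exact Finset.image_subset_image (by simp [Finset.range_subset]; omega)
  have hinj : Set.InjOn F ↑(Finset.range m) := by
    intro a ha b hb hab
    simp only [Finset.coe_range, Set.mem_Iio] at ha hb
    by_contra hne
    obtain ⟨N, rfl⟩ : ∃ N, n = N + 1 := ⟨n - 1, by omega⟩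
    rcases lt_or_gt_of_ne hne with h | h
    · exact absurd hab (Nat.ne_of_gt (F_strict_lt' N h (by omega)))
    · exact absurd hab (Nat.ne_of_lt (F_strict_lt' N h (by omega)))
  have hcard : (SimpleGraph.pathGraph n).numStatusValues = m := by
    unfold SimpleGraph.numStatusValues
    rw [himg, himg2, Finset.card_image_of_injOn hinj, Finset.card_range]
  refine ⟨hcard, ?_⟩
  have hdiam : (SimpleGraph.pathGraph n).diam = n - 1 := by
    have hpre := SimpleGraph.pathGraph_preconnected n
    have htop : (SimpleGraph.pathGraph n).ediam ≠ ⊤ := by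
      obtain ⟨u, v, h⟩ := SimpleGraph.exists_edist_eq_ediam_of_finite
        (G := SimpleGraph.pathGraph n)
      rw [← h]
      exact SimpleGraph.edist_ne_top_iff_reachable.mpr (hpre u v)
    apply le_antisymm
    · obtain ⟨u, v, h⟩ := SimpleGraph.exists_dist_eq_diam (G := SimpleGraph.pathGraph n)
      rw [← h, pathGraph_dist']
      have := u.isLt
      have := v.isLt
      simp only [Nat.dist]
      omega
    · have := SimpleGraph.dist_le_diam htop (u := (⟨0, by omega⟩ : Fin n))
        (v := (⟨n - 1, by omega⟩ : Fin n))
      rw [pathGraph_dist'] at this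
      simp only [Nat.dist] at this
      omega
  rw [hdiam]
  omega
end

section
/- There exists a finite connected graph G together with a partition of its vertex set that is an equitable partition of G but is not a status partition of G; that is, for every pair of parts P, Q, all vertices of P have the same number of neighbors in Q, yet some part contains two vertices with different statuses. -/
/-!
In the graph on `Fin 8` with the edges listed below, the partition `{0, 3}, {1, 4}, {2, 5, 6, 7}`
is equitable, which is a finite check of neighbour counts. Its last part joins vertices of
different status: the breadth-first layerings from `2` and from `6`, which certify all distances
from these vertices, sum to `13` and `14`.
-/

namespace SimpleGraph

open Finset

variable {V : Type*} (G : SimpleGraph V)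

structure IsBFSLayering (s : V) (f : V → ℕ) : Prop where
  apply_source : f s = 0
  le_add_one_of_adj : ∀ x y, G.Adj x y → f y ≤ f x + 1
  exists_adj_add_one : ∀ v, v ≠ s → ∃ w, G.Adj w v ∧ f w + 1 = f v

namespace IsBFSLayering

variable {G} {s : V} {f : V → ℕ}

lemma le_length (hf : G.IsBFSLayering s f) {u v : V} (p : G.Walk u v) :
    f v ≤ f u + p.length := by
  induction p with
  | nil => simp
  | cons h _ ih =>
    rw [Walk.length_cons]
    have := hf.le_add_one_of_adj _ _ h
    omega

lemma exists_walk (hf : G.IsBFSLayering s f) (v : V) : ∃ p : G.Walk s v, p.length = f v := by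
  induction h : f v using Nat.strong_induction_on generalizing v with
  | _ n ih =>
    by_cases hv : v = s
    · subst hv
      exact ⟨.nil, by simp [← h, hf.apply_source]⟩
    · obtain ⟨w, hwv, hw⟩ := hf.exists_adj_add_one v hv
      obtain ⟨p, hp⟩ := ih (f w) (by omega) w rfl
      exact ⟨p.concat hwv, by rw [Walk.length_concat, hp, hw, h]⟩

lemma dist_eq (hf : G.IsBFSLayering s f) (v : V) : G.dist s v = f v := by
  obtain ⟨p, hp⟩ := hf.exists_walk v
  obtain ⟨q, hq⟩ := p.reachable.exists_walk_length_eq_dist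
  have := hf.le_length q
  rw [hf.apply_source] at this
  exact le_antisymm (hp ▸ G.dist_le p) (by omega)

lemma connected (hf : G.IsBFSLayering s f) : G.Connected :=
  G.connected_iff_exists_forall_reachable.2
    ⟨s, fun v => let ⟨p, _⟩ := hf.exists_walk v; p.reachable⟩

lemma status_eq_sum [Fintype V] (hf : G.IsBFSLayering s f) : G.status s = ∑ v, f v :=
  Finset.sum_congr rfl fun v _ => hf.dist_eq v

end IsBFSLayering

def IsEquitableColoring {ι : Type*} [Fintype V] [DecidableRel G.Adj] [DecidableEq ι]
    (c : V → ι) : Prop :=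
  ∀ u v, c u = c v → ∀ j, #{w | c w = j ∧ G.Adj u w} = #{w | c w = j ∧ G.Adj v w}

variable {G} in
lemma IsEquitableColoring.ncard_eq {ι : Type*} [Fintype V] [DecidableRel G.Adj] [DecidableEq ι]
    {c : V → ι} (hc : G.IsEquitableColoring c) :
    ∀ P ∈ (Setoid.ker c).classes, ∀ Q ∈ (Setoid.ker c).classes, ∀ u ∈ P, ∀ v ∈ P,
      {w | w ∈ Q ∧ G.Adj u w}.ncard = {w | w ∈ Q ∧ G.Adj v w}.ncard := by
  rintro _ ⟨y, rfl⟩ _ ⟨z, rfl⟩ u (hu : c u = c y) v (hv : c v = c y)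
  have key := hc u v (hu.trans hv.symm) (c z)
  simpa only [← Set.ncard_coe_finset, coe_filter, mem_univ, true_and, Set.mem_ofPred_eq,
    Setoid.ker_def] using key

end SimpleGraph

namespace EquitableNotStatus

open SimpleGraph

def edges : List (Fin 8 × Fin 8) :=
  [(0, 1), (0, 3), (0, 5), (0, 6), (1, 2), (1, 6), (2, 3), (3, 4), (3, 7), (4, 5), (4, 7)]

abbrev graph : SimpleGraph (Fin 8) := fromRel fun a b => (a, b) ∈ edges

def coloring : Fin 8 → Fin 3 := ![0, 1, 2, 0, 1, 2, 2, 2]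

lemma isEquitableColoring : graph.IsEquitableColoring coloring := by
  unfold IsEquitableColoring
  decide

lemma isBFSLayering_two : graph.IsBFSLayering 2 ![2, 1, 0, 1, 2, 3, 2, 2] :=
  ⟨rfl, by decide, by decide⟩

lemma isBFSLayering_six : graph.IsBFSLayering 6 ![1, 1, 2, 2, 3, 2, 0, 3] :=
  ⟨rfl, by decide, by decide⟩

lemma status_two_ne_status_six : graph.status 2 ≠ graph.status 6 := by
  rw [isBFSLayering_two.status_eq_sum, isBFSLayering_six.status_eq_sum]
  decide

end EquitableNotStatus

open EquitableNotStatus in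
/-- There is a finite connected graph `G` with a partition of its vertex set that is
equitable (for every ordered pair of parts `(P, Q)`, the number of neighbors in `Q` of a
vertex of `P` does not depend on the vertex) but is not a status partition (some part
contains two vertices of different status). -/
theorem exists_equitable_partition_not_status_partition :
    ∃ (n : ℕ) (G : SimpleGraph (Fin n)) (Part : Set (Set (Fin n))),
      G.Connected ∧ Setoid.IsPartition Part ∧
      (∀ P ∈ Part, ∀ Q ∈ Part, ∀ u ∈ P, ∀ v ∈ P,
        {w : Fin n | w ∈ Q ∧ G.Adj u w}.ncard = {w : Fin n | w ∈ Q ∧ G.Adj v w}.ncard) ∧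
      (∃ P ∈ Part, ∃ u ∈ P, ∃ v ∈ P, G.status u ≠ G.status v) :=
  ⟨8, graph, (Setoid.ker coloring).classes, isBFSLayering_two.connected,
    Setoid.isPartition_classes _, isEquitableColoring.ncard_eq,
    ⟨_, Setoid.mem_classes _ 2, 2, rfl, 6, rfl, status_two_ne_status_six⟩⟩
end

section
/- If G is a finite connected distance mean-regular graph, then the partition of the vertex set of G into status classes (two vertices in the same part if and only if they have equal status) is an equitable partition of G. -/
/-- `D_h(w)`: the set of vertices at distance `h` from `w`. -/
noncomputable def SimpleGraph.distCell {V : Type*} [Fintype V] (G : SimpleGraph V)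
    (w : V) (h : ℕ) : Finset V :=
  Finset.univ.filter (fun x => G.dist w x = h)

/-- `G` is distance mean-regular: for every `h ≤ diam G` and all `i, j`, the average of
`|{w : d(u,w) = i ∧ d(v,w) = j}|` over the vertices `v` at distance `h` from `u` does not
depend on the vertex `u`. -/
noncomputable def SimpleGraph.IsDistanceMeanRegular {V : Type*} [Fintype V]
    (G : SimpleGraph V) : Prop :=
  ∀ u u' : V, ∀ h i j : ℕ, h ≤ G.diam →
    (∑ v ∈ G.distCell u h,
        ((Finset.univ.filter (fun w => G.dist u w = i ∧ G.dist v w = j)).card : ℚ)) /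
      (G.distCell u h).card =
    (∑ v ∈ G.distCell u' h,
        ((Finset.univ.filter (fun w => G.dist u' w = i ∧ G.dist v w = j)).card : ℚ)) /
      (G.distCell u' h).card

lemma distCell_zero {V : Type*} [Fintype V] (G : SimpleGraph V) (hG : G.Connected) (u : V) :
    G.distCell u 0 = {u} := by
  ext x
  simp [SimpleGraph.distCell, hG.dist_eq_zero_iff, eq_comm]

/-- Cell cardinalities do not depend on the base vertex. -/
lemma distCell_card_const {V : Type*} [Fintype V] (G : SimpleGraph V) (hG : G.Connected)
    (hreg : G.IsDistanceMeanRegular) (u u' : V) (i : ℕ) :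
    (G.distCell u i).card = (G.distCell u' i).card := by
  have h := hreg u u' 0 i i (Nat.zero_le _)
  rw [distCell_zero G hG u, distCell_zero G hG u'] at h
  simp only [Finset.sum_singleton, Finset.card_singleton, Nat.cast_one, div_one,
    and_self] at h
  exact_mod_cast h

/-- The status is constant on a connected distance mean-regular graph. -/
lemma status_const {V : Type*} [Fintype V] (G : SimpleGraph V) (hG : G.Connected)
    (hreg : G.IsDistanceMeanRegular) (u u' : V) : G.status u = G.status u' := by
  classical
  set t := (Finset.univ.image (G.dist u)) ∪ (Finset.univ.image (G.dist u')) with ht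
  have key : ∀ w : V, ∀ hw : w = u ∨ w = u',
      G.status w = ∑ i ∈ t, i * (G.distCell w i).card := by
    intro w hw
    have hmaps : ∀ x ∈ (Finset.univ : Finset V), G.dist w x ∈ t := by
      intro x _
      rcases hw with rfl | rfl
      · exact Finset.mem_union_left _ (Finset.mem_image_of_mem _ (Finset.mem_univ x))
      · exact Finset.mem_union_right _ (Finset.mem_image_of_mem _ (Finset.mem_univ x))
    have := Finset.sum_fiberwise_of_maps_to hmaps (fun x => G.dist w x)
    rw [SimpleGraph.status, ← this]
    refine Finset.sum_congr rfl fun i _ => ?_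
    rw [SimpleGraph.distCell, Finset.sum_congr rfl (fun x hx => ?_), Finset.sum_const,
      smul_eq_mul, mul_comm]
    exact (Finset.mem_filter.mp hx).2
  rw [key u (Or.inl rfl), key u' (Or.inr rfl)]
  exact Finset.sum_congr rfl fun i _ => by
    rw [distCell_card_const G hG hreg u u' i]

/-- If `G` is a finite connected distance mean-regular graph, then the partition of its
vertex set into status classes is an equitable partition: any two vertices of equal status
have the same number of neighbors in every status class. -/
theorem status_partition_equitable_of_distanceMeanRegular {V : Type*} [Fintype V]
    (G : SimpleGraph V) [DecidableRel G.Adj] (hG : G.Connected)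
    (hreg : G.IsDistanceMeanRegular) :
    ∀ u v : V, G.status u = G.status v → ∀ c : ℕ,
      (Finset.univ.filter (fun w => G.Adj u w ∧ G.status w = c)).card =
      (Finset.univ.filter (fun w => G.Adj v w ∧ G.status w = c)).card := by
  classical
  intro u v _ c
  by_cases hc : G.status u = c
  · have hstat : ∀ w : V, G.status w = c := fun w => (status_const G hG hreg w u).trans hc
    have h1 : ∀ x : V, (Finset.univ.filter (fun w => G.Adj x w ∧ G.status w = c)).card =
        (G.distCell x 1).card := by
      intro x
      congr 1
      ext w
      simp [SimpleGraph.distCell, hstat w, SimpleGraph.dist_eq_one_iff_adj]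
    rw [h1 u, h1 v, distCell_card_const G hG hreg u v 1]
  · have hstat : ∀ w : V, G.status w ≠ c := fun w h =>
      hc ((status_const G hG hreg u w).trans h)
    have h0 : ∀ x : V, (Finset.univ.filter (fun w => G.Adj x w ∧ G.status w = c)) = ∅ := by
      intro x
      ext w
      simp [hstat w]
    rw [h0 u, h0 v]
end

section
/- Let m ≥ 1, n = 3m, and let a_1, ..., a_n be positive integers with A = Σ_{i=1}^n a_i and A = mB. Suppose {1, ..., n} can be partitioned into m triples such that Σ_{i ∈ t} a_i = B for every triple t of the partition. Then there exists a tree T on 1 + m + n + A vertices whose status sequence is the multiset consisting of: the value 3A + 7m with multiplicity 1; the value 4A − 2B + 11m − 7 with multiplicity m; for each i ∈ {1, ..., n}, the value 5A − 2B − 2a_i + 15m − 8 with multiplicity 1; and for each i ∈ {1, ..., n}, the value 6A − 2B − 2a_i + 19m − 9 with multiplicity a_i. -/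
/-- The status sequence of a finite graph, as a multiset of integers. -/
noncomputable def SimpleGraph.statusSequenceZ {V : Type*} [Fintype V] (G : SimpleGraph V) :
    Multiset ℤ :=
  Finset.univ.val.map (fun v => (G.status v : ℤ))

open Finset
open scoped symmDiff

theorem Finset.card_insert_symmDiff {α : Type*} [DecidableEq α] {a : α} {s : Finset α}
    (ha : a ∉ s) (t : Finset α) :
    (#(insert a s ∆ t) : ℤ) = #(s ∆ t) + if a ∈ t then -1 else 1 := by
  split_ifs with hat
  · have : s ∆ t = insert a (insert a s ∆ t) := by
      ext x; by_cases hx : x = a <;> simp_all [mem_symmDiff]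
    rw [this, card_insert_of_notMem (by simp [mem_symmDiff, hat])]
    push_cast; ring
  · have : insert a s ∆ t = insert a (s ∆ t) := by
      ext x; by_cases hx : x = a <;> simp_all [mem_symmDiff]
    rw [this, card_insert_of_notMem (by simp [mem_symmDiff, hat, ha])]
    push_cast; ring

theorem Multiset.map_univ_eq_sum_singleton {α β : Type*} [Fintype α] (g : α → β) :
    Finset.univ.val.map g = ∑ x, ({g x} : Multiset β) := by
  conv_lhs => rw [← Multiset.sum_map_singleton (Finset.univ.val.map g), Multiset.map_map]
  rfl

namespace SimpleGraph

variable {V W : Type*}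

theorem reachable_and_dist_eq_of_descent (G : SimpleGraph V) (D : V → V → ℕ)
    (hD : ∀ x, D x x = 0)
    (hdesc : ∀ x y, x ≠ y → ∃ z, G.Adj x z ∧ D z y + 1 = D x y)
    (hlip : ∀ x z y, G.Adj x z → D x y ≤ D z y + 1) (x y : V) :
    G.Reachable x y ∧ G.dist x y = D x y := by
  have lower {x y : V} (p : G.Walk x y) : D x y ≤ p.length := by
    induction p with
    | nil => simp [hD]
    | @cons u v w h q ih => have := hlip u v w h; simp only [Walk.length_cons]; omega
  have walk : ∀ n x, D x y = n → ∃ p : G.Walk x y, p.length = n := by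
    intro n
    induction n with
    | zero =>
      intro x hx
      obtain rfl : x = y := by
        by_contra hxy
        obtain ⟨z, -, hz⟩ := hdesc x y hxy
        omega
      exact ⟨.nil, rfl⟩
    | succ n ih =>
      intro x hx
      obtain ⟨z, hxz, hz⟩ := hdesc x y (by rintro rfl; simp [hD] at hx)
      obtain ⟨p, hp⟩ := ih z (by omega)
      exact ⟨.cons hxz p, by simp [hp]⟩
  obtain ⟨p, hp⟩ := walk _ x rfl
  obtain ⟨q, hq⟩ := Reachable.exists_walk_length_eq_dist ⟨p⟩
  exact ⟨⟨p⟩, le_antisymm (hp ▸ dist_le p) (hq ▸ lower q)⟩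

theorem Iso.dist_le {G : SimpleGraph V} {H : SimpleGraph W} (φ : G ≃g H) (u v : V) :
    H.dist (φ u) (φ v) ≤ G.dist u v := by
  by_cases h : G.Reachable u v
  · obtain ⟨p, hp⟩ := h.exists_walk_length_eq_dist
    exact (SimpleGraph.dist_le (p.map φ.toHom)).trans (by simp [hp])
  · rw [dist_eq_zero_of_not_reachable (fun h' => h (φ.reachable_iff.mp h'))]
    exact Nat.zero_le _

theorem Iso.dist_eq {G : SimpleGraph V} {H : SimpleGraph W} (φ : G ≃g H) (u v : V) :
    H.dist (φ u) (φ v) = G.dist u v := by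
  refine le_antisymm (φ.dist_le u v) ?_
  simpa using φ.symm.dist_le (φ u) (φ v)

theorem Iso.statusSequenceZ_eq [Fintype V] [Fintype W] {G : SimpleGraph V} {H : SimpleGraph W}
    (φ : G ≃g H) : H.statusSequenceZ = G.statusSequenceZ := by
  have hstatus (v : V) : H.status (φ v) = G.status v := by
    simp only [status, ← φ.dist_eq v]
    exact Fintype.sum_equiv φ.toEquiv _ _ (fun _ => rfl) |>.symm
  have huniv : (univ : Finset V).val.map φ = (univ : Finset W).val := by
    have := congrArg Finset.val (Finset.map_univ_equiv φ.toEquiv)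
    rwa [Finset.map_val] at this
  rw [statusSequenceZ, statusSequenceZ, ← huniv, Multiset.map_map]
  exact Multiset.map_congr rfl fun v _ => by simp [hstatus]

def ofParent (p : V → V) : SimpleGraph V :=
  fromRel fun x y => y = p x

end SimpleGraph

/-- `anc x` is the set of vertices on the path from `x` up to the root `r`, the root excluded. -/
structure IsAncestorSets {V : Type*} [DecidableEq V] (p : V → V) (r : V)
    (anc : V → Finset V) : Prop where
  parent_eq_self_iff : ∀ x, p x = x ↔ x = r
  anc_root : anc r = ∅
  notMem_anc_parent : ∀ x, x ≠ r → x ∉ anc (p x)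
  anc_eq_insert : ∀ x, x ≠ r → anc x = insert x (anc (p x))

namespace IsAncestorSets

open SimpleGraph

variable {V : Type*} [DecidableEq V] {p : V → V} {r : V} {anc : V → Finset V}

theorem adj_parent (h : IsAncestorSets p r anc) {x : V} (hx : x ≠ r) :
    (ofParent p).Adj x (p x) :=
  (fromRel_adj _ _ _).mpr ⟨fun hpx => hx ((h.parent_eq_self_iff x).mp hpx.symm), Or.inl rfl⟩

theorem card_anc_symmDiff (h : IsAncestorSets p r anc) {x : V} (hx : x ≠ r) (t : Finset V) :
    (#(anc x ∆ t) : ℤ) = #(anc (p x) ∆ t) + if x ∈ t then -1 else 1 := by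
  rw [h.anc_eq_insert x hx, Finset.card_insert_symmDiff (h.notMem_anc_parent x hx)]

theorem exists_child_mem_anc (h : IsAncestorSets p r anc) {x y : V} (hxy : x ≠ y)
    (hx : x = r ∨ x ∈ anc y) : ∃ z, z ≠ r ∧ p z = x ∧ z ∈ anc y := by
  induction hn : #(anc y) using Nat.strong_induction_on generalizing y with
  | _ n ih =>
    have hy : y ≠ r := by
      rintro rfl
      rcases hx with rfl | hx
      · exact hxy rfl
      · simp [h.anc_root] at hx
    rw [h.anc_eq_insert y hy] at hx hn ⊢
    by_cases hpy : p y = x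
    · exact ⟨y, hy, hpy, mem_insert_self _ _⟩
    have hx' : x = r ∨ x ∈ anc (p y) := by
      rcases hx with hx | hx
      · exact Or.inl hx
      · exact Or.inr ((mem_insert.mp hx).resolve_left hxy)
    have hlt : #(anc (p y)) < n := by
      rw [← hn, card_insert_of_notMem (h.notMem_anc_parent y hy)]
      omega
    obtain ⟨z, hzr, hzx, hz⟩ := ih _ hlt (Ne.symm hpy) hx' rfl
    exact ⟨z, hzr, hzx, mem_insert_of_mem hz⟩

theorem dist_eq (h : IsAncestorSets p r anc) (x y : V) :
    (ofParent p).Reachable x y ∧ (ofParent p).dist x y = #(anc x ∆ anc y) := by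
  refine reachable_and_dist_eq_of_descent (ofParent p) (fun x y => #(anc x ∆ anc y))
    (fun _ => by simp only [symmDiff_self, bot_eq_empty, card_empty])
    (fun x y hxy => ?_) (fun x z y hxz => ?_) x y
  · by_cases hx : x = r ∨ x ∈ anc y
    · obtain ⟨z, hzr, rfl, hz⟩ := h.exists_child_mem_anc hxy hx
      refine ⟨z, (h.adj_parent hzr).symm, ?_⟩
      have := h.card_anc_symmDiff hzr (anc y)
      simp only [hz, if_true] at this
      omega
    · rw [not_or] at hx
      refine ⟨p x, h.adj_parent hx.1, ?_⟩
      have := h.card_anc_symmDiff hx.1 (anc y)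
      simp only [hx.2, if_false] at this
      omega
  · obtain ⟨hne, rfl | rfl⟩ := (fromRel_adj _ _ _).mp hxz
    · have := h.card_anc_symmDiff (fun hx => hne ((h.parent_eq_self_iff x).mpr hx).symm) (anc y)
      split_ifs at this <;> omega
    · have := h.card_anc_symmDiff (fun hz => hne ((h.parent_eq_self_iff z).mpr hz)) (anc y)
      split_ifs at this <;> omega

theorem bijective_edge (h : IsAncestorSets p r anc) :
    Function.Bijective fun x : {x // x ≠ r} =>
      (⟨s(x.1, p x.1), h.adj_parent x.2⟩ : (ofParent p).edgeSet) := by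
  have hpr : p r = r := (h.parent_eq_self_iff r).mpr rfl
  refine ⟨fun x y hxy => Subtype.ext ?_, fun ⟨e, he⟩ => ?_⟩
  · rcases Sym2.eq_iff.mp (congrArg Subtype.val hxy) with ⟨hxy, -⟩ | ⟨hx, hy⟩
    · exact hxy
    · have hmem : x.1 ∈ anc (p x.1) := by
        rw [hy, h.anc_eq_insert y y.2, ← hx, h.anc_eq_insert x x.2]
        exact mem_insert_of_mem (mem_insert_self _ _)
      exact absurd hmem (h.notMem_anc_parent x x.2)
  · induction e using Sym2.ind with
    | h u v =>
      obtain ⟨huv, rfl | rfl⟩ := (fromRel_adj _ _ _).mp (mem_edgeSet _ |>.mp he)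
      · exact ⟨⟨u, fun hu => huv (by rw [hu, hpr])⟩, rfl⟩
      · exact ⟨⟨v, fun hv => huv (by rw [hv, hpr])⟩, Subtype.ext Sym2.eq_swap⟩

theorem isTree [Fintype V] (h : IsAncestorSets p r anc) : (ofParent p).IsTree := by
  rw [isTree_iff_connected_and_card, ← Nat.card_congr (Equiv.ofBijective _ h.bijective_edge),
    Nat.card_eq_fintype_card, Fintype.card_subtype_compl, Fintype.card_subtype_eq,
    Nat.card_eq_fintype_card]
  have := Fintype.card_pos_iff.mpr ⟨r⟩
  exact ⟨(connected_iff _).mpr ⟨fun x y => (h.dist_eq x y).1, ⟨r⟩⟩, by omega⟩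

theorem status_root [Fintype V] (h : IsAncestorSets p r anc) :
    (ofParent p).status r = ∑ u, #(anc u) := by
  simp [status, (h.dist_eq _ _).2, h.anc_root, ← bot_eq_empty]

theorem status_eq [Fintype V] (h : IsAncestorSets p r anc) {x : V} (hx : x ≠ r) :
    ((ofParent p).status x : ℤ) =
      (ofParent p).status (p x) + Fintype.card V - 2 * #{u | x ∈ anc u} := by
  simp only [status, Nat.cast_sum, (h.dist_eq _ _).2, h.card_anc_symmDiff hx, sum_add_distrib,
    sum_ite, sum_const, nsmul_eq_mul]
  have := card_filter_add_card_filter_not (s := univ) (fun u => x ∈ anc u)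
  rw [card_univ] at this
  omega

end IsAncestorSets

namespace ThreePartitionTree

open SimpleGraph

variable {m : ℕ} {a : Fin (3 * m) → ℕ}

variable (a) in
abbrev Vertex := Unit ⊕ Fin m ⊕ Fin (3 * m) ⊕ Σ i : Fin (3 * m), Fin (a i)

variable (a) in
def root : Vertex a := .inl ()

def hub (j : Fin m) : Vertex a := .inr (.inl j)

def mid (i : Fin (3 * m)) : Vertex a := .inr (.inr (.inl i))

def leaf (i : Fin (3 * m)) (k : Fin (a i)) : Vertex a := .inr (.inr (.inr ⟨i, k⟩))

variable (f : Fin (3 * m) → Fin m)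

def parent : Vertex a → Vertex a
  | .inl _ | .inr (.inl _) => root a
  | .inr (.inr (.inl i)) => hub (f i)
  | .inr (.inr (.inr p)) => mid p.1

def anc : Vertex a → Finset (Vertex a)
  | .inl _ => ∅
  | .inr (.inl j) => {hub j}
  | .inr (.inr (.inl i)) => {mid i, hub (f i)}
  | .inr (.inr (.inr p)) => {leaf p.1 p.2, mid p.1, hub (f p.1)}

theorem isAncestorSets : IsAncestorSets (parent f) (root a) (anc f) where
  parent_eq_self_iff x := by rcases x with _ | _ | _ | _ <;> simp [parent, root, hub, mid]
  anc_root := rfl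
  notMem_anc_parent x hx := by
    rcases x with _ | _ | _ | _ <;> simp_all [parent, anc, root, hub, mid]
  anc_eq_insert x hx := by
    rcases x with _ | _ | _ | _ <;> simp_all [parent, anc, root, hub, mid, leaf]

theorem sum_vertex {M : Type*} [AddCommMonoid M] (g : Vertex a → M) :
    ∑ u, g u = g (root a) + ∑ j, g (hub j) + ∑ i, g (mid i) + ∑ i, ∑ k, g (leaf i k) := by
  simp only [Fintype.sum_sum_type, Fintype.sum_sigma, Fintype.sum_unique, add_assoc]
  rfl

variable (a) in
theorem card_vertex : Fintype.card (Vertex a) = 1 + m + 3 * m + ∑ i, a i := by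
  simp only [Fintype.card_sum, Fintype.card_unit, Fintype.card_fin, Fintype.card_sigma]
  ring

theorem sum_card_anc : ∑ u, #(anc (a := a) f u) = 7 * m + 3 * ∑ i, a i := by
  rw [sum_vertex]
  simp only [anc, root, hub, mid, leaf, card_empty, card_singleton, sum_const, card_univ,
    Fintype.card_fin, smul_eq_mul, mul_one, zero_add, mem_singleton, mem_insert, Sum.inr.injEq,
    reduceCtorEq, or_self, not_false_eq_true, card_insert_of_notMem, Nat.reduceAdd, mul_comm,
    mul_sum, Nat.add_right_cancel_iff]
  ring

theorem card_filter_hub_mem_anc (j : Fin m) {B : ℕ} (h3 : #{i | f i = j} = 3)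
    (hB : ∑ i ∈ {i | f i = j}, a i = B) : #{u | hub (a := a) j ∈ anc f u} = 4 + B := by
  rw [card_filter, sum_vertex]
  simp [anc, root, hub, mid, leaf, @eq_comm _ j, sum_ite, h3, hB]

theorem card_filter_mid_mem_anc (i : Fin (3 * m)) :
    #{u | mid i ∈ anc (a := a) f u} = 1 + a i := by
  rw [card_filter, sum_vertex]
  simp [anc, root, hub, mid, leaf]

theorem card_filter_leaf_mem_anc (i : Fin (3 * m)) (k : Fin (a i)) :
    #{u | leaf i k ∈ anc f u} = 1 := by
  refine card_eq_one.mpr ⟨leaf i k, ?_⟩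
  ext u
  rcases u with _ | _ | _ | _ <;> simp [anc, leaf, mid, hub, eq_comm]

variable {f} {A B : ℕ}

variable (f) in
theorem status_root (hA : A = ∑ i, a i) :
    ((ofParent (parent f)).status (root a) : ℤ) = 3 * A + 7 * m := by
  rw [(isAncestorSets f).status_root, sum_card_anc, hA]
  push_cast; ring

theorem status_hub (hA : A = ∑ i, a i)
    (hf : ∀ j, #{i | f i = j} = 3 ∧ ∑ i ∈ {i | f i = j}, a i = B) (j : Fin m) :
    ((ofParent (parent f)).status (hub (a := a) j) : ℤ) = 4 * A - 2 * B + 11 * m - 7 := by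
  rw [(isAncestorSets f).status_eq (by simp [hub, root]), show parent f (hub j) = root a from rfl,
    status_root f hA, card_vertex, card_filter_hub_mem_anc f j (hf j).1 (hf j).2, ← hA]
  push_cast; ring

theorem status_mid (hA : A = ∑ i, a i)
    (hf : ∀ j, #{i | f i = j} = 3 ∧ ∑ i ∈ {i | f i = j}, a i = B) (i : Fin (3 * m)) :
    ((ofParent (parent f)).status (mid (a := a) i) : ℤ) =
      5 * A - 2 * B - 2 * a i + 15 * m - 8 := by
  rw [(isAncestorSets f).status_eq (by simp [mid, root]),
    show parent f (mid i) = hub (f i) from rfl, status_hub hA hf, card_vertex,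
    card_filter_mid_mem_anc, ← hA]
  push_cast; ring

theorem status_leaf (hA : A = ∑ i, a i)
    (hf : ∀ j, #{i | f i = j} = 3 ∧ ∑ i ∈ {i | f i = j}, a i = B)
    (i : Fin (3 * m)) (k : Fin (a i)) :
    ((ofParent (parent f)).status (leaf i k) : ℤ) =
      6 * A - 2 * B - 2 * a i + 19 * m - 9 := by
  rw [(isAncestorSets f).status_eq (by simp [leaf, root]),
    show parent f (leaf i k) = mid i from rfl, status_mid hA hf, card_vertex,
    card_filter_leaf_mem_anc, ← hA]
  push_cast; ring

theorem statusSequenceZ_eq (hA : A = ∑ i, a i)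
    (hf : ∀ j, #{i | f i = j} = 3 ∧ ∑ i ∈ {i | f i = j}, a i = B) :
    (ofParent (parent (a := a) f)).statusSequenceZ =
      ({(3 * A + 7 * m : ℤ)} : Multiset ℤ) +
      Multiset.replicate m ((4 * A : ℤ) - 2 * B + 11 * m - 7) +
      Finset.univ.val.map
        (fun i : Fin (3 * m) => ((5 * A : ℤ) - 2 * B - 2 * (a i) + 15 * m - 8)) +
      ∑ i : Fin (3 * m),
        Multiset.replicate (a i) ((6 * A : ℤ) - 2 * B - 2 * (a i) + 19 * m - 9) := by
  rw [statusSequenceZ, Multiset.map_univ_eq_sum_singleton, sum_vertex]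
  simp only [status_root f hA, status_hub hA hf, status_mid hA hf, status_leaf hA hf, sum_const,
    card_univ, Fintype.card_fin, Multiset.nsmul_singleton, Multiset.map_univ_eq_sum_singleton]

end ThreePartitionTree

theorem exists_tree_of_three_partition_general (m B : ℕ)
    (a : Fin (3 * m) → ℕ)
    (A : ℕ) (hA : A = ∑ i, a i)
    (f : Fin (3 * m) → Fin m)
    (hf : ∀ t : Fin m,
      (Finset.univ.filter (fun i => f i = t)).card = 3 ∧
      ∑ i ∈ Finset.univ.filter (fun i => f i = t), a i = B) :
    ∃ G : SimpleGraph (Fin (1 + m + 3 * m + A)),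
      G.IsTree ∧
      G.statusSequenceZ =
        ({(3 * A + 7 * m : ℤ)} : Multiset ℤ) +
        Multiset.replicate m ((4 * A : ℤ) - 2 * B + 11 * m - 7) +
        Finset.univ.val.map
          (fun i : Fin (3 * m) => ((5 * A : ℤ) - 2 * B - 2 * (a i) + 15 * m - 8)) +
        ∑ i : Fin (3 * m),
          Multiset.replicate (a i) ((6 * A : ℤ) - 2 * B - 2 * (a i) + 19 * m - 9) := by
  let e : ThreePartitionTree.Vertex a ≃ Fin (1 + m + 3 * m + A) :=
    Fintype.equivFinOfCardEq (by rw [ThreePartitionTree.card_vertex, hA])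
  let φ := SimpleGraph.Iso.map e (SimpleGraph.ofParent (ThreePartitionTree.parent f))
  exact ⟨_, φ.isTree_iff.mp (ThreePartitionTree.isAncestorSets f).isTree,
    φ.statusSequenceZ_eq.trans (ThreePartitionTree.statusSequenceZ_eq hA hf)⟩

/-- If the positive integers `a_1, …, a_{3m}` with sum `A = mB` admit a partition of the
index set into `m` triples each summing to `B`, then there is a tree on `1 + m + n + A`
vertices (`n = 3m`) whose status sequence consists of `3A + 7m` once, `4A − 2B + 11m − 7`
with multiplicity `m`, `5A − 2B − 2aᵢ + 15m − 8` once for each `i`, and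
`6A − 2B − 2aᵢ + 19m − 9` with multiplicity `aᵢ` for each `i`. -/
theorem exists_tree_of_three_partition (m B : ℕ) (hm : 1 ≤ m)
    (a : Fin (3 * m) → ℕ) (ha : ∀ i, 1 ≤ a i)
    (A : ℕ) (hA : A = ∑ i, a i) (hAB : A = m * B)
    (f : Fin (3 * m) → Fin m)
    (hf : ∀ t : Fin m,
      (Finset.univ.filter (fun i => f i = t)).card = 3 ∧
      ∑ i ∈ Finset.univ.filter (fun i => f i = t), a i = B) :
    ∃ G : SimpleGraph (Fin (1 + m + 3 * m + A)),
      G.IsTree ∧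
      G.statusSequenceZ =
        ({(3 * A + 7 * m : ℤ)} : Multiset ℤ) +
        Multiset.replicate m ((4 * A : ℤ) - 2 * B + 11 * m - 7) +
        Finset.univ.val.map
          (fun i : Fin (3 * m) => ((5 * A : ℤ) - 2 * B - 2 * (a i) + 15 * m - 8)) +
        ∑ i : Fin (3 * m),
          Multiset.replicate (a i) ((6 * A : ℤ) - 2 * B - 2 * (a i) + 19 * m - 9) :=
  exists_tree_of_three_partition_general m B a A hA f hf
end

section
/- Let m ≥ 1, n = 3m, and let a_1, ..., a_n be positive integers with A = Σ_{i=1}^n a_i and A = mB, such that B/4 < a_i < B/2 for all i and A > 3B + 19m + 9. If there exists a tree whose status sequence equals the multiset consisting of the value 3A + 7m with multiplicity 1, the value 4A − 2B + 11m − 7 with multiplicity m, for each i ∈ {1, ..., n} the value 5A − 2B − 2a_i + 15m − 8 with multiplicity 1, and for each i ∈ {1, ..., n} the value 6A − 2B − 2a_i + 19m − 9 with multiplicity a_i, then {1, ..., n} can be partitioned into m triples such that Σ_{i ∈ t} a_i = B for every triple t of the partition. -/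
namespace TreeProof
open SimpleGraph Walk

variable {V : Type} [DecidableEq V] {G : SimpleGraph V}

lemma length_eq_dist (hT : G.IsTree) {u v : V} (p : G.Walk u v) (hp : p.IsPath) :
    p.length = G.dist u v := by
  obtain ⟨q, hq, hlen⟩ := hT.isConnected.exists_path_of_dist u v
  have heq : (⟨p, hp⟩ : G.Path u v) = ⟨q, hq⟩ := hT.IsAcyclic.path_unique _ _
  rw [← hlen]
  exact congrArg Walk.length (congrArg Subtype.val heq)

lemma dist_split (hT : G.IsTree) {w v u : V} (p : G.Walk w v) (hp : p.IsPath)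
    (hu : u ∈ p.support) : G.dist w v = G.dist w u + G.dist u v := by
  have h1 : (p.takeUntil u hu).IsPath := hp.takeUntil hu
  have h2 : (p.dropUntil u hu).IsPath := hp.dropUntil hu
  have hs := p.take_spec hu
  have hl : (p.takeUntil u hu).length + (p.dropUntil u hu).length = p.length := by
    rw [← Walk.length_append, hs]
  rw [← length_eq_dist hT p hp, ← length_eq_dist hT _ h1, ← length_eq_dist hT _ h2, hl]

lemma dist_adj_dichotomy (hT : G.IsTree) {u v : V} (h : G.Adj u v) (w : V) :
    G.dist w v = G.dist w u + 1 ∨ G.dist w u = G.dist w v + 1 := by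
  classical
  obtain ⟨p, hp, hlen⟩ := hT.isConnected.exists_path_of_dist u w
  have hd1 : G.dist u v = 1 := dist_eq_one_iff_adj.mpr h
  have c1 : G.dist w u = G.dist u w := SimpleGraph.dist_comm
  have c2 : G.dist w v = G.dist v w := SimpleGraph.dist_comm
  by_cases hv : v ∈ p.support
  · right
    have hsp := dist_split hT p hp hv
    have c3 : G.dist v w = G.dist w v := SimpleGraph.dist_comm
    omega
  · left
    have hp' : (Walk.cons h.symm p).IsPath := hp.cons hv
    have hl : (Walk.cons h.symm p).length = p.length + 1 := Walk.length_cons _ _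
    have hld := length_eq_dist hT _ hp'
    omega

lemma penultimate_unique (hT : G.IsTree) {w v y y' : V} (hy : G.Adj y v) (hy' : G.Adj y' v)
    (h1 : G.dist w v = G.dist w y + 1) (h2 : G.dist w v = G.dist w y' + 1) : y = y' := by
  classical
  obtain ⟨p, hp, hlen⟩ := hT.isConnected.exists_path_of_dist y w
  obtain ⟨p', hp', hlen'⟩ := hT.isConnected.exists_path_of_dist y' w
  have hv : v ∉ p.support := by
    intro hmem
    have hsp := dist_split hT p hp hmem
    have hd1 : G.dist y v = 1 := dist_eq_one_iff_adj.mpr hy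
    have c1 : G.dist w y = G.dist y w := SimpleGraph.dist_comm
    have c2 : G.dist w v = G.dist v w := SimpleGraph.dist_comm
    omega
  have hv' : v ∉ p'.support := by
    intro hmem
    have hsp := dist_split hT p' hp' hmem
    have hd1 : G.dist y' v = 1 := dist_eq_one_iff_adj.mpr hy'
    have c1 : G.dist w y' = G.dist y' w := SimpleGraph.dist_comm
    have c2 : G.dist w v = G.dist v w := SimpleGraph.dist_comm
    omega
  have q1 : (Walk.cons hy.symm p).IsPath := hp.cons hv
  have q2 : (Walk.cons hy'.symm p').IsPath := hp'.cons hv'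
  have heq : (⟨Walk.cons hy.symm p, q1⟩ : G.Path v w) = ⟨Walk.cons hy'.symm p', q2⟩ :=
    hT.IsAcyclic.path_unique _ _
  have heq' : (Walk.cons hy.symm p) = (Walk.cons hy'.symm p') :=
    congrArg Subtype.val heq
  have := congrArg (fun q => Walk.getVert q 1) heq'
  simpa [Walk.getVert_cons_succ, Walk.getVert_zero] using this


lemma exists_parent (hT : G.IsTree) (c : V) {v : V} (h : v ≠ c) :
    ∃ y, G.Adj v y ∧ G.dist c y + 1 = G.dist c v := by
  classical
  obtain ⟨p, hp, hlen⟩ := hT.isConnected.exists_path_of_dist c v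
  have hpos : 0 < G.dist c v := (hT.isConnected c v).pos_dist_of_ne (Ne.symm h)
  have hlt : G.dist c v - 1 < p.length := by omega
  have hadj : G.Adj (p.getVert (G.dist c v - 1)) (p.getVert (G.dist c v - 1 + 1)) :=
    p.adj_getVert_succ hlt
  have hv : p.getVert (G.dist c v - 1 + 1) = v := by
    have he : G.dist c v - 1 + 1 = p.length := by omega
    rw [he, p.getVert_length]
  rw [hv] at hadj
  have hmem : p.getVert (G.dist c v - 1) ∈ p.support :=
    Walk.mem_support_iff_exists_getVert.mpr ⟨_, rfl, by omega⟩
  have hsp := dist_split hT p hp hmem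
  have hd1 : G.dist (p.getVert (G.dist c v - 1)) v = 1 := dist_eq_one_iff_adj.mpr hadj
  exact ⟨_, hadj.symm, by omega⟩

noncomputable def par (hT : G.IsTree) (c : V) (v : V) : V :=
  if h : v = c then c else (exists_parent hT c h).choose

lemma par_adj (hT : G.IsTree) (c : V) {v : V} (h : v ≠ c) : G.Adj v (par hT c v) := by
  rw [par, dif_neg h]; exact (exists_parent hT c h).choose_spec.1

lemma par_dist (hT : G.IsTree) (c : V) {v : V} (h : v ≠ c) :
    G.dist c (par hT c v) + 1 = G.dist c v := by
  rw [par, dif_neg h]; exact (exists_parent hT c h).choose_spec.2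

lemma par_unique (hT : G.IsTree) (c : V) {v y : V} (h : v ≠ c) (hadj : G.Adj v y)
    (hd : G.dist c y + 1 = G.dist c v) : y = par hT c v := by
  have h2 := par_dist hT c h
  exact penultimate_unique hT (w := c) hadj.symm (par_adj hT c h).symm
    (by omega) (by omega)

lemma adj_classify (hT : G.IsTree) (c : V) {v y : V} (hadj : G.Adj v y) :
    (v ≠ c ∧ y = par hT c v) ∨ G.dist c y = G.dist c v + 1 := by
  rcases dist_adj_dichotomy hT hadj c with h | h
  · right; exact h
  · left
    have hvc : v ≠ c := by
      intro e; subst e; rw [SimpleGraph.dist_self] at h; omega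
    exact ⟨hvc, par_unique hT c hvc hadj (by omega)⟩

variable [Fintype V]

noncomputable def Dset (hT : G.IsTree) (c : V) (v : V) : Finset V :=
  Finset.univ.filter (fun w => G.dist w (par hT c v) = G.dist w v + 1)

lemma mem_Dset (hT : G.IsTree) (c : V) {v w : V} :
    w ∈ Dset hT c v ↔ G.dist w (par hT c v) = G.dist w v + 1 := by
  rw [Dset, Finset.mem_filter]; simp

lemma self_mem_Dset (hT : G.IsTree) (c : V) {v : V} (h : v ≠ c) : v ∈ Dset hT c v := by
  rw [mem_Dset, SimpleGraph.dist_self, dist_eq_one_iff_adj]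
  exact par_adj hT c h

lemma notMem_Dset (hT : G.IsTree) (c : V) {v w : V} (h : v ≠ c)
    (hw : w ∉ Dset hT c v) : G.dist w v = G.dist w (par hT c v) + 1 := by
  rw [mem_Dset] at hw
  rcases dist_adj_dichotomy hT (par_adj hT c h) w with h1 | h1
  · exact absurd h1 hw
  · exact h1

lemma status_par (hT : G.IsTree) (c : V) {v : V} (h : v ≠ c) :
    (G.status v : ℤ) =
      G.status (par hT c v) + Fintype.card V - 2 * (Dset hT c v).card := by
  classical
  have hind : ∑ w : V, (if w ∈ Dset hT c v then (1:ℤ) else 0) = (Dset hT c v).card := by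
    simp
  have key : ∀ w : V, ((G.dist w v : ℤ) - G.dist w (par hT c v))
      = 1 - 2 * (if w ∈ Dset hT c v then (1:ℤ) else 0) := by
    intro w
    by_cases hw : w ∈ Dset hT c v
    · have := mem_Dset hT c |>.mp hw
      simp only [if_pos hw]
      omega
    · have := notMem_Dset hT c h hw
      simp only [if_neg hw]
      omega
  have e1 : (G.status v : ℤ) = ∑ w : V, (G.dist w v : ℤ) := by
    unfold SimpleGraph.status
    push_cast
    exact Finset.sum_congr rfl fun w _ => by rw [SimpleGraph.dist_comm]
  have e2 : (G.status (par hT c v) : ℤ) = ∑ w : V, (G.dist w (par hT c v) : ℤ) := by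
    unfold SimpleGraph.status
    push_cast
    exact Finset.sum_congr rfl fun w _ => by rw [SimpleGraph.dist_comm]
  have hmain : ∑ w : V, ((G.dist w v : ℤ) - G.dist w (par hT c v))
      = (Fintype.card V : ℤ) - 2 * (Dset hT c v).card := by
    rw [Finset.sum_congr rfl fun w _ => key w, Finset.sum_sub_distrib,
      ← Finset.mul_sum, hind]
    simp
  rw [Finset.sum_sub_distrib] at hmain
  rw [e1, e2] at *
  linarith [hmain]


noncomputable def children (hT : G.IsTree) (c : V) (v : V) : Finset V :=
  Finset.univ.filter (fun y => y ≠ c ∧ par hT c y = v)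

lemma mem_children (hT : G.IsTree) (c : V) {v y : V} :
    y ∈ children hT c v ↔ y ≠ c ∧ par hT c y = v := by
  rw [children, Finset.mem_filter]; simp

lemma child_adj (hT : G.IsTree) (c : V) {v y : V} (hy : y ∈ children hT c v) :
    G.Adj y v := by
  obtain ⟨h1, h2⟩ := (mem_children hT c).mp hy
  have := par_adj hT c h1; rwa [h2] at this

lemma child_dist (hT : G.IsTree) (c : V) {v y : V} (hy : y ∈ children hT c v) :
    G.dist c y = G.dist c v + 1 := by
  obtain ⟨h1, h2⟩ := (mem_children hT c).mp hy
  have := par_dist hT c h1; rw [h2] at this; omega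

lemma mem_Dset_child (hT : G.IsTree) (c : V) {v y w : V} (hy : y ∈ children hT c v) :
    w ∈ Dset hT c y ↔ G.dist w v = G.dist w y + 1 := by
  obtain ⟨h1, h2⟩ := (mem_children hT c).mp hy
  rw [mem_Dset, h2]

lemma Dset_child_subset (hT : G.IsTree) (c : V) {v y : V} (h : v ≠ c)
    (hy : y ∈ children hT c v) : Dset hT c y ⊆ (Dset hT c v).erase v := by
  intro w hw
  rw [mem_Dset_child hT c hy] at hw
  have hne : w ≠ v := by
    intro e; subst e
    rw [SimpleGraph.dist_self] at hw; omega
  rw [Finset.mem_erase]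
  refine ⟨hne, ?_⟩
  by_contra hwv
  have h1 := notMem_Dset hT c h hwv
  have heq : y = par hT c v :=
    penultimate_unique hT (w := w) (child_adj hT c hy) (par_adj hT c h).symm
      (by omega) (by omega)
  have d1 := child_dist hT c hy
  have d2 := par_dist hT c h
  rw [heq] at d1
  omega

lemma self_notMem_Dset_child (hT : G.IsTree) (c : V) {v y : V} (hy : y ∈ children hT c v) :
    v ∉ Dset hT c y := by
  intro hw
  rw [mem_Dset_child hT c hy] at hw
  have : G.dist v y = 1 := dist_eq_one_iff_adj.mpr (child_adj hT c hy).symm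
  rw [SimpleGraph.dist_self] at hw
  omega

lemma Dset_children_disjoint (hT : G.IsTree) (c : V) {v y y' : V}
    (hy : y ∈ children hT c v) (hy' : y' ∈ children hT c v) (hne : y ≠ y') :
    Disjoint (Dset hT c y) (Dset hT c y') := by
  rw [Finset.disjoint_left]
  intro w hw hw'
  rw [mem_Dset_child hT c hy] at hw
  rw [mem_Dset_child hT c hy'] at hw'
  exact hne (penultimate_unique hT (w := w) (child_adj hT c hy) (child_adj hT c hy')
    (by omega) (by omega))

lemma Dset_cover (hT : G.IsTree) (c : V) {v : V} (h : v ≠ c) :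
    Dset hT c v = insert v ((children hT c v).biUnion (fun y => Dset hT c y)) := by
  apply Finset.Subset.antisymm
  · intro w hw
    rw [Finset.mem_insert]
    by_cases hwv : w = v
    · left; exact hwv
    right
    have hreach : G.Reachable v w := hT.isConnected v w
    have hpos : 0 < G.dist v w := hreach.pos_dist_of_ne (Ne.symm hwv)
    obtain ⟨p, hp, hlen⟩ := hreach.exists_path_of_dist
    have h01 : G.Adj (p.getVert 0) (p.getVert 1) := p.adj_getVert_succ (by omega)
    rw [p.getVert_zero] at h01
    set y := p.getVert 1 with hydef
    have hmem : y ∈ p.support := Walk.mem_support_iff_exists_getVert.mpr ⟨1, rfl, by omega⟩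
    have hsp := dist_split hT p hp hmem
    have hd1 : G.dist v y = 1 := dist_eq_one_iff_adj.mpr h01
    rcases adj_classify hT c h01.symm with ⟨hyc, hpar⟩ | hcase
    · have hchild : y ∈ children hT c v := (mem_children hT c).mpr ⟨hyc, hpar.symm⟩
      rw [Finset.mem_biUnion]
      refine ⟨y, hchild, ?_⟩
      rw [mem_Dset_child hT c hchild]
      have c1 : G.dist w v = G.dist v w := SimpleGraph.dist_comm
      have c2 : G.dist w y = G.dist y w := SimpleGraph.dist_comm
      omega
    · exfalso
      have heq : y = par hT c v := par_unique hT c h h01 (by omega)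
      have hmemD := (mem_Dset hT c).mp hw
      rw [← heq] at hmemD
      have c1 : G.dist w v = G.dist v w := SimpleGraph.dist_comm
      have c2 : G.dist w y = G.dist y w := SimpleGraph.dist_comm
      omega
  · intro w hw
    rw [Finset.mem_insert] at hw
    rcases hw with rfl | hw
    · exact self_mem_Dset hT c h
    rw [Finset.mem_biUnion] at hw
    obtain ⟨y, hy, hwy⟩ := hw
    exact Finset.erase_subset _ _ (Dset_child_subset hT c h hy hwy)

lemma Dset_card_rec (hT : G.IsTree) (c : V) {v : V} (h : v ≠ c) :
    (Dset hT c v).card = 1 + ∑ y ∈ children hT c v, (Dset hT c y).card := by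
  rw [Dset_cover hT c h]
  rw [Finset.card_insert_of_notMem, Finset.card_biUnion]
  · omega
  · intro y hy y' hy' hne
    exact Dset_children_disjoint hT c hy hy' hne
  · rw [Finset.mem_biUnion]
    rintro ⟨y, hy, hvy⟩
    exact self_notMem_Dset_child hT c hy hvy

lemma Dset_child_card_lt (hT : G.IsTree) (c : V) {v y : V} (h : v ≠ c)
    (hy : y ∈ children hT c v) : (Dset hT c y).card + 1 ≤ (Dset hT c v).card := by
  have h1 : (Dset hT c y).card ≤ ((Dset hT c v).erase v).card :=
    Finset.card_le_card (Dset_child_subset hT c h hy)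
  have h2 : ((Dset hT c v).erase v).card = (Dset hT c v).card - 1 :=
    Finset.card_erase_of_mem (self_mem_Dset hT c h)
  have h3 : 0 < (Dset hT c v).card := Finset.card_pos.mpr ⟨v, self_mem_Dset hT c h⟩
  omega

lemma Dset_card_pos (hT : G.IsTree) (c : V) {v : V} (h : v ≠ c) :
    0 < (Dset hT c v).card := Finset.card_pos.mpr ⟨v, self_mem_Dset hT c h⟩


lemma exists_bij_of_map_eq {α β : Type*} [DecidableEq α] [DecidableEq β] [Nonempty β]
    (s : Finset α) (t : Finset β) (f : α → ℤ) (g : β → ℤ)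
    (h : s.val.map f = t.val.map g) :
    ∃ e : α → β, Set.BijOn e ↑s ↑t ∧ ∀ a ∈ s, g (e a) = f a := by
  classical
  induction s using Finset.induction_on generalizing t with
  | empty =>
    have : t.val.map g = 0 := by simpa using h.symm
    have ht : t = ∅ := by
      rwa [Multiset.map_eq_zero, Finset.val_eq_zero] at this
    subst ht
    exact ⟨fun _ => Classical.arbitrary β, by simp [Set.bijOn_empty], by simp⟩
  | @insert a s ha ih =>
    have hfa : f a ∈ t.val.map g := by
      rw [← h]
      exact Multiset.mem_map_of_mem f (by simp)
    obtain ⟨b, hbmem, hgb⟩ := Multiset.mem_map.mp hfa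
    have hbt : b ∈ t := hbmem
    have hval : (insert a s).val = a ::ₘ s.val := Finset.insert_val_of_notMem ha
    have htval : t.val = b ::ₘ (t.erase b).val := by
      rw [Finset.erase_val]
      exact (Multiset.cons_erase hbmem).symm
    have h' : s.val.map f = (t.erase b).val.map g := by
      rw [hval, htval] at h
      simp only [Multiset.map_cons] at h
      rw [hgb] at h
      exact (Multiset.cons_inj_right _).mp h
    obtain ⟨e', hbij', hval'⟩ := ih (t.erase b) h'
    refine ⟨fun x => if x = a then b else e' x, ⟨?_, ?_, ?_⟩, ?_⟩
    · intro x hx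
      simp only [Finset.coe_insert, Set.mem_insert_iff, Finset.mem_coe] at hx
      by_cases hxa : x = a
      · simp [hxa, hbt]
      · simp only [if_neg hxa]
        have hxs : x ∈ s := by tauto
        exact Finset.mem_coe.mp (Finset.erase_subset _ _ (hbij'.1 hxs))
    · intro x hx y hy hxy
      simp only [Finset.coe_insert, Set.mem_insert_iff, Finset.mem_coe] at hx hy
      by_cases hxa : x = a <;> by_cases hya : y = a
      · rw [hxa, hya]
      · exfalso
        have hys : y ∈ s := by tauto
        have : e' y ∈ t.erase b := hbij'.1 hys
        simp only [if_pos hxa, if_neg hya] at hxy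
        exact (Finset.mem_erase.mp this).1 hxy.symm
      · exfalso
        have hxs : x ∈ s := by tauto
        have : e' x ∈ t.erase b := hbij'.1 hxs
        simp only [if_neg hxa, if_pos hya] at hxy
        exact (Finset.mem_erase.mp this).1 hxy
      · have hxs : x ∈ s := by tauto
        have hys : y ∈ s := by tauto
        simp only [if_neg hxa, if_neg hya] at hxy
        exact hbij'.2.1 hxs hys hxy
    · intro y hy
      have hyt : y ∈ t := hy
      by_cases hyb : y = b
      · exact ⟨a, by simp, by simp [hyb]⟩
      · have : y ∈ t.erase b := Finset.mem_erase.mpr ⟨hyb, hyt⟩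
        obtain ⟨x, hxs, hxy⟩ := hbij'.2.2 (Finset.mem_coe.mpr this)
        have hxs' : x ∈ s := hxs
        have hxa : x ≠ a := fun e => ha (e ▸ hxs')
        exact ⟨x, by simp [hxs'], by simp [if_neg hxa, hxy]⟩
    · intro x hx
      by_cases hxa : x = a
      · simp [hxa, hgb]
      · simp only [if_neg hxa]
        exact hval' x (by simp at hx; tauto)


lemma card_finsum {ι : Type*} (s : Finset ι) (f : ι → Multiset ℤ) :
    Multiset.card (∑ i ∈ s, f i) = ∑ i ∈ s, Multiset.card (f i) := by
  classical
  induction s using Finset.induction_on with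
  | empty => simp
  | @insert a s ha ih => simp [Finset.sum_insert ha, ih]

end TreeProof

open TreeProof
/-- Let `a_1, …, a_{3m}` be positive integers with sum `A = mB`, `B/4 < aᵢ < B/2` for all `i`
and `A > 3B + 19m + 9`.  If some tree has status sequence consisting of `3A + 7m` once,
`4A − 2B + 11m − 7` with multiplicity `m`, `5A − 2B − 2aᵢ + 15m − 8` once for each `i`, and
`6A − 2B − 2aᵢ + 19m − 9` with multiplicity `aᵢ` for each `i`, then the index set
`{1, …, 3m}` can be partitioned into `m` triples each of which has `a`-sum equal to `B`. -/
theorem three_partition_of_exists_tree (m B : ℕ) (hm : 1 ≤ m)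
    (a : Fin (3 * m) → ℕ) (ha : ∀ i, 1 ≤ a i)
    (A : ℕ) (hA : A = ∑ i, a i) (hAB : A = m * B)
    (hlow : ∀ i, B < 4 * a i) (hhigh : ∀ i, 2 * a i < B)
    (hbig : 3 * B + 19 * m + 9 < A)
    (htree : ∃ (V : Type) (_ : Fintype V) (G : SimpleGraph V),
      G.IsTree ∧
      G.statusSequenceZ =
        ({(3 * A + 7 * m : ℤ)} : Multiset ℤ) +
        Multiset.replicate m ((4 * A : ℤ) - 2 * B + 11 * m - 7) +
        Finset.univ.val.map
          (fun i : Fin (3 * m) => ((5 * A : ℤ) - 2 * B - 2 * (a i) + 15 * m - 8)) +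
        ∑ i : Fin (3 * m),
          Multiset.replicate (a i) ((6 * A : ℤ) - 2 * B - 2 * (a i) + 19 * m - 9)) :
    ∃ f : Fin (3 * m) → Fin m, ∀ t : Fin m,
      (Finset.univ.filter (fun i => f i = t)).card = 3 ∧
      ∑ i ∈ Finset.univ.filter (fun i => f i = t), a i = B := by
  classical
  obtain ⟨V, instV, G, hT, hseq⟩ := htree
  rw [SimpleGraph.statusSequenceZ] at hseq
  -- basic numeric facts
  have i₀ : Fin (3 * m) := ⟨0, by omega⟩
  have hB3 : 3 ≤ B := by have h1 := ha i₀; have h2 := hhigh i₀; omega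
  have hAbig : 3 * B + 19 * m + 10 ≤ A := hbig
  -- the number of vertices
  have hcardV : Fintype.card V = A + 4 * m + 1 := by
    have hc := congrArg Multiset.card hseq
    simp only [Multiset.card_map, Multiset.card_add, Multiset.card_singleton,
      Multiset.card_replicate] at hc
    have h1 : Multiset.card (Finset.univ.val : Multiset V) = Fintype.card V := rfl
    have h2 : Multiset.card (Finset.univ.val : Multiset (Fin (3 * m))) = 3 * m := by
      have h3 : (Finset.univ : Finset (Fin (3 * m))).card = 3 * m := by simp
      exact h3
    have hcs : Multiset.card (∑ i : Fin (3 * m),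
        Multiset.replicate (a i) ((6 * A : ℤ) - 2 * B - 2 * (a i) + 19 * m - 9)) = A := by
      rw [card_finsum]
      simp only [Multiset.card_replicate]
      omega
    omega
  -- membership of statuses
  have hmem : ∀ v : V, (G.status v : ℤ) = 3 * A + 7 * m ∨
      (G.status v : ℤ) = (4 * A : ℤ) - 2 * B + 11 * m - 7 ∨
      (∃ i, (G.status v : ℤ) = (5 * A : ℤ) - 2 * B - 2 * (a i) + 15 * m - 8) ∨
      (∃ i, (G.status v : ℤ) = (6 * A : ℤ) - 2 * B - 2 * (a i) + 19 * m - 9) := by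
    intro v
    have hv : (G.status v : ℤ) ∈ Finset.univ.val.map (fun v : V => (G.status v : ℤ)) :=
      Multiset.mem_map_of_mem _ (Finset.mem_univ v)
    rw [hseq] at hv
    simp only [Multiset.mem_add, Multiset.mem_singleton, Multiset.mem_replicate,
      Multiset.mem_map, Multiset.mem_sum, Finset.mem_univ, true_and] at hv
    rcases hv with ((h | ⟨-, h⟩) | ⟨i, -, hi⟩) | ⟨i, -, hi⟩
    · exact Or.inl h
    · exact Or.inr (Or.inl h)
    · exact Or.inr (Or.inr (Or.inl ⟨i, hi.symm⟩))
    · exact Or.inr (Or.inr (Or.inr ⟨i, hi⟩))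
  
  -- value inequalities
  have hvals : ∀ i j : Fin (3 * m),
      (3 * A + 7 * m : ℤ) < (4 * A : ℤ) - 2 * B + 11 * m - 7 ∧
      ((4 * A : ℤ) - 2 * B + 11 * m - 7) < (5 * A : ℤ) - 2 * B - 2 * (a i) + 15 * m - 8 ∧
      ((5 * A : ℤ) - 2 * B - 2 * (a i) + 15 * m - 8)
        < (6 * A : ℤ) - 2 * B - 2 * (a j) + 19 * m - 9 := by
    intro i j
    have h1 := hlow i; have h2 := hhigh i; have h3 := hlow j; have h4 := hhigh j
    have h5 := ha i; have h6 := ha j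
    omega
  -- counts
  have hcnt : ∀ x : ℤ, (Finset.univ.filter (fun v : V => x = (G.status v : ℤ))).card
      = Multiset.count x
        (({(3 * A + 7 * m : ℤ)} : Multiset ℤ) +
        Multiset.replicate m ((4 * A : ℤ) - 2 * B + 11 * m - 7) +
        Finset.univ.val.map
          (fun i : Fin (3 * m) => ((5 * A : ℤ) - 2 * B - 2 * (a i) + 15 * m - 8)) +
        ∑ i : Fin (3 * m),
          Multiset.replicate (a i) ((6 * A : ℤ) - 2 * B - 2 * (a i) + 19 * m - 9)) := by
    intro x
    have h := congrArg (Multiset.count x) hseq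
    rw [Multiset.count_map] at h
    rw [← h, ← Finset.filter_val]
    rfl
  have hsplit : ∀ x : ℤ,
      Multiset.count x
        (({(3 * A + 7 * m : ℤ)} : Multiset ℤ) +
        Multiset.replicate m ((4 * A : ℤ) - 2 * B + 11 * m - 7) +
        Finset.univ.val.map
          (fun i : Fin (3 * m) => ((5 * A : ℤ) - 2 * B - 2 * (a i) + 15 * m - 8)) +
        ∑ i : Fin (3 * m),
          Multiset.replicate (a i) ((6 * A : ℤ) - 2 * B - 2 * (a i) + 19 * m - 9))
      = (if x = (3 * A + 7 * m : ℤ) then 1 else 0)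
        + (if ((4 * A : ℤ) - 2 * B + 11 * m - 7) = x then m else 0)
        + (Finset.univ.filter
            (fun i : Fin (3 * m) => x = (5 * A : ℤ) - 2 * B - 2 * (a i) + 15 * m - 8)).card
        + ∑ i : Fin (3 * m),
            (if ((6 * A : ℤ) - 2 * B - 2 * (a i) + 19 * m - 9) = x then a i else 0) := by
    intro x
    rw [Multiset.count_add, Multiset.count_add, Multiset.count_add,
      Multiset.count_singleton, Multiset.count_replicate, Multiset.count_map,
      Multiset.count_sum']
    rw [← Finset.filter_val]
    simp only [Multiset.count_replicate]
    rfl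
  have hv1card : (Finset.univ.filter
      (fun v : V => (3 * A + 7 * m : ℤ) = (G.status v : ℤ))).card = 1 := by
    rw [hcnt _, hsplit _]
    rw [if_pos rfl, if_neg (by have := hvals i₀ i₀; omega)]
    have hf : (Finset.univ.filter (fun i : Fin (3 * m) =>
        (3 * A + 7 * m : ℤ) = (5 * A : ℤ) - 2 * B - 2 * (a i) + 15 * m - 8)).card = 0 := by
      rw [Finset.card_eq_zero, Finset.filter_eq_empty_iff]
      intro i _
      have := hvals i i; omega
    have hs : (∑ i : Fin (3 * m), if ((6 * A : ℤ) - 2 * B - 2 * (a i) + 19 * m - 9)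
        = (3 * A + 7 * m : ℤ) then a i else 0) = 0 :=
      Finset.sum_eq_zero fun i _ => if_neg (by have := hvals i i; omega)
    rw [hf, hs]
    try omega
  obtain ⟨c, hcmem⟩ : ∃ c : V, c ∈ Finset.univ.filter
      (fun v : V => (3 * A + 7 * m : ℤ) = (G.status v : ℤ)) :=
    Finset.card_pos.mp (by omega)
  have hstc : (G.status c : ℤ) = 3 * A + 7 * m := ((Finset.mem_filter.mp hcmem).2).symm
  have huniq : ∀ v : V, (G.status v : ℤ) = 3 * A + 7 * m → v = c := by
    intro v hv
    by_contra hne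
    have h2 : 1 < (Finset.univ.filter
        (fun v : V => (3 * A + 7 * m : ℤ) = (G.status v : ℤ))).card := by
      rw [Finset.one_lt_card]
      exact ⟨v, Finset.mem_filter.mpr ⟨Finset.mem_univ _, hv.symm⟩, c, hcmem, hne⟩
    omega
  have hv2card : (Finset.univ.filter
      (fun v : V => ((4 * A : ℤ) - 2 * B + 11 * m - 7) = (G.status v : ℤ))).card = m := by
    rw [hcnt _, hsplit _]
    rw [if_neg (by have := hvals i₀ i₀; omega), if_pos rfl]
    have hf : (Finset.univ.filter (fun i : Fin (3 * m) =>
        ((4 * A : ℤ) - 2 * B + 11 * m - 7) = (5 * A : ℤ) - 2 * B - 2 * (a i) + 15 * m - 8)).card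
        = 0 := by
      rw [Finset.card_eq_zero, Finset.filter_eq_empty_iff]
      intro i _
      have := hvals i i; omega
    have hs : (∑ i : Fin (3 * m), if ((6 * A : ℤ) - 2 * B - 2 * (a i) + 19 * m - 9)
        = ((4 * A : ℤ) - 2 * B + 11 * m - 7) then a i else 0) = 0 :=
      Finset.sum_eq_zero fun i _ => if_neg (by have h1 := hvals i i; omega)
    rw [hf, hs]
    try omega
  
  -- tree machinery
  have hdc0 : ∀ v : V, G.dist c v = 0 → v = c := by
    intro v h
    exact ((hT.isConnected.dist_eq_zero_iff).mp h).symm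
  have hstep1 : ∀ v : V, G.dist c v = 1 →
      (G.status v : ℤ) = (4 * A : ℤ) - 2 * B + 11 * m - 7 ∧
      (Dset hT c v).card = B + 4 := by
    intro v hd
    have hvc : v ≠ c := fun e => by rw [e, SimpleGraph.dist_self] at hd; omega
    have hpd := par_dist hT c hvc
    have hpc : par hT c v = c := hdc0 _ (by omega)
    have hst := status_par hT c hvc
    rw [hpc] at hst
    have hpos := Dset_card_pos hT c hvc
    rcases hmem v with h | h | ⟨i, h⟩ | ⟨i, h⟩
    · exact absurd (huniq v h) hvc
    · exact ⟨h, by omega⟩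
    · exfalso; have h1 := hlow i; have h2 := hhigh i; omega
    · exfalso; have h1 := hlow i; have h2 := hhigh i; omega
  have hstep2 : ∀ v : V, G.dist c v = 2 →
      ∃ i : Fin (3 * m), (G.status v : ℤ) = (5 * A : ℤ) - 2 * B - 2 * (a i) + 15 * m - 8 ∧
      (Dset hT c v).card = a i + 1 := by
    intro v hd
    have hvc : v ≠ c := fun e => by rw [e, SimpleGraph.dist_self] at hd; omega
    have hpd := par_dist hT c hvc
    obtain ⟨hstp, hcardp⟩ := hstep1 (par hT c v) (by omega)
    have hrc : par hT c v ≠ c := fun e => by rw [e, SimpleGraph.dist_self] at hpd; omega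
    have hchild : v ∈ children hT c (par hT c v) := (mem_children hT c).mpr ⟨hvc, rfl⟩
    have hlt := Dset_child_card_lt hT c hrc hchild
    have hst := status_par hT c hvc
    have hpos := Dset_card_pos hT c hvc
    rcases hmem v with h | h | ⟨i, h⟩ | ⟨i, h⟩
    · exact absurd (huniq v h) hvc
    · exfalso; omega
    · exact ⟨i, h, by have h1 := hlow i; have h2 := hhigh i; omega⟩
    · exfalso; have h1 := hlow i; have h2 := hhigh i; omega
  have hstep3 : ∀ v : V, G.dist c v = 3 →
      (∃ j : Fin (3 * m), (G.status v : ℤ) = (6 * A : ℤ) - 2 * B - 2 * (a j) + 19 * m - 9) ∧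
      (Dset hT c v).card ≤ B := by
    intro v hd
    have hvc : v ≠ c := fun e => by rw [e, SimpleGraph.dist_self] at hd; omega
    have hpd := par_dist hT c hvc
    obtain ⟨i, hstp, hcardp⟩ := hstep2 (par hT c v) (by omega)
    have hrc : par hT c v ≠ c := fun e => by rw [e, SimpleGraph.dist_self] at hpd; omega
    have hchild : v ∈ children hT c (par hT c v) := (mem_children hT c).mpr ⟨hvc, rfl⟩
    have hlt := Dset_child_card_lt hT c hrc hchild
    have hst := status_par hT c hvc
    have hpos := Dset_card_pos hT c hvc
    have hi1 := hlow i; have hi2 := hhigh i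
    rcases hmem v with h | h | ⟨j, h⟩ | ⟨j, h⟩
    · exact absurd (huniq v h) hvc
    · exfalso; omega
    · exfalso; have h1 := hlow j; have h2 := hhigh j; omega
    · exact ⟨⟨j, h⟩, by omega⟩
  have hstep4 : ∀ v : V, G.dist c v ≠ 4 := by
    intro v hd
    have hvc : v ≠ c := fun e => by rw [e, SimpleGraph.dist_self] at hd; omega
    have hpd := par_dist hT c hvc
    obtain ⟨⟨j, hstp⟩, hcardp⟩ := hstep3 (par hT c v) (by omega)
    have hrc : par hT c v ≠ c := fun e => by rw [e, SimpleGraph.dist_self] at hpd; omega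
    have hchild : v ∈ children hT c (par hT c v) := (mem_children hT c).mpr ⟨hvc, rfl⟩
    have hlt := Dset_child_card_lt hT c hrc hchild
    have hst := status_par hT c hvc
    have hpos := Dset_card_pos hT c hvc
    have hj1 := hlow j; have hj2 := hhigh j
    rcases hmem v with h | h | ⟨k, h⟩ | ⟨k, h⟩
    · exact absurd (huniq v h) hvc
    · omega
    · have h1 := hlow k; have h2 := hhigh k; omega
    · have h1 := hlow k; have h2 := hhigh k; omega
  have hdle3 : ∀ v : V, G.dist c v ≤ 3 := by
    have H : ∀ k : ℕ, ∀ v : V, G.dist c v = k → G.dist c v ≤ 3 := by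
      intro k
      induction k using Nat.strong_induction_on with
      | _ k ih =>
        intro v hv
        by_contra hgt
        push_neg at hgt
        have hk : 4 ≤ k := by omega
        have hvc : v ≠ c := fun e => by rw [e, SimpleGraph.dist_self] at hv; omega
        have hpd := par_dist hT c hvc
        have hple := ih (k - 1) (by omega) (par hT c v) (by omega)
        exact hstep4 v (by omega)
    exact fun v => H _ v rfl
  
  -- depth characterisations
  have hd1_iff : ∀ v : V,
      ((G.status v : ℤ) = (4 * A : ℤ) - 2 * B + 11 * m - 7 ↔ G.dist c v = 1) := by
    intro v
    constructor
    · intro h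
      have h3 := hdle3 v
      have hcases : G.dist c v = 0 ∨ G.dist c v = 1 ∨ G.dist c v = 2 ∨ G.dist c v = 3 := by
        omega
      rcases hcases with h0 | h1 | h2 | h3'
      · exfalso; rw [hdc0 v h0] at h; have := hvals i₀ i₀; omega
      · exact h1
      · exfalso; obtain ⟨i, hi, -⟩ := hstep2 v h2; have := hvals i i; omega
      · exfalso; obtain ⟨⟨j, hj⟩, -⟩ := hstep3 v h3'; have := hvals j j; omega
    · intro h; exact (hstep1 v h).1
  have hd2_iff : ∀ v : V,
      ((∃ i : Fin (3 * m), (G.status v : ℤ) = (5 * A : ℤ) - 2 * B - 2 * (a i) + 15 * m - 8)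
        ↔ G.dist c v = 2) := by
    intro v
    constructor
    · rintro ⟨i, h⟩
      have h3 := hdle3 v
      have hcases : G.dist c v = 0 ∨ G.dist c v = 1 ∨ G.dist c v = 2 ∨ G.dist c v = 3 := by
        omega
      rcases hcases with h0 | h1 | h2 | h3'
      · exfalso; rw [hdc0 v h0] at h; have := hvals i i; omega
      · exfalso; have := (hstep1 v h1).1; have h5 := hvals i i; omega
      · exact h2
      · exfalso; obtain ⟨⟨j, hj⟩, -⟩ := hstep3 v h3'; have := hvals i j; omega
    · intro h
      obtain ⟨i, hi, -⟩ := hstep2 v h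
      exact ⟨i, hi⟩
  -- depth-2 statuses are exactly the W values
  have hcntW : ∀ x : ℤ, Multiset.count x
      (Multiset.map (fun v : V => (G.status v : ℤ))
        (Finset.univ.filter (fun v : V => G.dist c v = 2)).val)
      = (Finset.univ.filter
          (fun v : V => G.dist c v = 2 ∧ x = (G.status v : ℤ))).card := by
    intro x
    rw [Multiset.count_map, ← Finset.filter_val, Finset.filter_filter]
    rfl
  have hmapW : Multiset.map (fun v : V => (G.status v : ℤ))
      (Finset.univ.filter (fun v : V => G.dist c v = 2)).val
      = Multiset.map (fun i : Fin (3 * m) => ((5 * A : ℤ) - 2 * B - 2 * (a i) + 15 * m - 8))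
        Finset.univ.val := by
    apply Multiset.ext.mpr
    intro x
    rw [hcntW x, Multiset.count_map, ← Finset.filter_val]
    show _ = (Finset.univ.filter
      (fun i : Fin (3 * m) => x = (5 * A : ℤ) - 2 * B - 2 * (a i) + 15 * m - 8)).card
    by_cases hx : ∃ i₁ : Fin (3 * m), x = (5 * A : ℤ) - 2 * B - 2 * (a i₁) + 15 * m - 8
    · obtain ⟨i₁, hi₁⟩ := hx
      have hLL : Finset.univ.filter
          (fun v : V => G.dist c v = 2 ∧ x = (G.status v : ℤ))
          = Finset.univ.filter (fun v : V => x = (G.status v : ℤ)) := by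
        apply Finset.filter_congr
        intro v _
        constructor
        · exact fun h => h.2
        · intro h
          refine ⟨(hd2_iff v).mp ⟨i₁, ?_⟩, h⟩
          omega
      rw [hLL, hcnt x, hsplit x]
      rw [if_neg (by have := hvals i₁ i₁; omega), if_neg (by have := hvals i₁ i₁; omega)]
      have hs : (∑ i : Fin (3 * m), if ((6 * A : ℤ) - 2 * B - 2 * (a i) + 19 * m - 9)
          = x then a i else 0) = 0 :=
        Finset.sum_eq_zero fun i _ => if_neg (by have := hvals i₁ i; omega)
      rw [hs]
      omega
    · have hL0 : (Finset.univ.filter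
          (fun v : V => G.dist c v = 2 ∧ x = (G.status v : ℤ))).card = 0 := by
        rw [Finset.card_eq_zero, Finset.filter_eq_empty_iff]
        rintro v - ⟨h2, hxv⟩
        obtain ⟨i, hi, -⟩ := hstep2 v h2
        exact hx ⟨i, by omega⟩
      have hR0 : (Finset.univ.filter
          (fun i : Fin (3 * m) => x = (5 * A : ℤ) - 2 * B - 2 * (a i) + 15 * m - 8)).card
          = 0 := by
        rw [Finset.card_eq_zero, Finset.filter_eq_empty_iff]
        intro i _ h
        exact hx ⟨i, h⟩
      rw [hL0, hR0]
  -- extract bijection between indices and depth-2 vertices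
  have : Nonempty V := ⟨c⟩
  obtain ⟨e, hebij, heval⟩ := exists_bij_of_map_eq Finset.univ
    (Finset.univ.filter (fun v : V => G.dist c v = 2))
    (fun i : Fin (3 * m) => ((5 * A : ℤ) - 2 * B - 2 * (a i) + 15 * m - 8))
    (fun v : V => (G.status v : ℤ)) hmapW.symm
  have he2 : ∀ i : Fin (3 * m), G.dist c (e i) = 2 := by
    intro i
    have := hebij.1 (by simp : (i : Fin (3 * m)) ∈ (Finset.univ : Finset (Fin (3 * m))))
    exact (Finset.mem_filter.mp this).2
  have heW : ∀ i : Fin (3 * m),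
      (G.status (e i) : ℤ) = (5 * A : ℤ) - 2 * B - 2 * (a i) + 15 * m - 8 :=
    fun i => heval i (Finset.mem_univ i)
  have hecard : ∀ i : Fin (3 * m), (Dset hT c (e i)).card = a i + 1 := by
    intro i
    obtain ⟨i', hst', hcard'⟩ := hstep2 (e i) (he2 i)
    have := heW i
    omega
  -- enumerate depth-1 vertices
  have hdepth1card : (Finset.univ.filter (fun v : V => G.dist c v = 1)).card = m := by
    rw [← hv2card]
    apply congrArg Finset.card
    apply Finset.filter_congr
    intro v _
    exact ⟨fun h => ((hd1_iff v).mpr h).symm, fun h => (hd1_iff v).mp h.symm⟩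
  have hcardsub :
      Fintype.card (Finset.univ.filter (fun v : V => G.dist c v = 1) : Finset V) = m := by
    rw [Fintype.card_coe]
    exact hdepth1card
  let eqv := Fintype.equivFinOfCardEq hcardsub
  have hparmem : ∀ i : Fin (3 * m),
      par hT c (e i) ∈ Finset.univ.filter (fun v : V => G.dist c v = 1) := by
    intro i
    have h2 := he2 i
    have hvc : e i ≠ c := fun hq => by rw [hq, SimpleGraph.dist_self] at h2; omega
    have hpd := par_dist hT c hvc
    exact Finset.mem_filter.mpr ⟨Finset.mem_univ _, by omega⟩
  refine ⟨fun i => eqv ⟨par hT c (e i), hparmem i⟩, ?_⟩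
  intro t
  have hvtmem := (eqv.symm t).2
  have hvtd : G.dist c ((eqv.symm t : _) : V) = 1 := (Finset.mem_filter.mp hvtmem).2
  have hvtc : ((eqv.symm t : _) : V) ≠ c := fun hq => by
    rw [hq, SimpleGraph.dist_self] at hvtd; omega
  have hfib : ∀ i : Fin (3 * m),
      ((eqv ⟨par hT c (e i), hparmem i⟩) = t ↔ par hT c (e i) = ((eqv.symm t : _) : V)) := by
    intro i
    rw [Equiv.apply_eq_iff_eq_symm_apply]
    exact ⟨fun h => congrArg Subtype.val h, fun h => Subtype.ext h⟩
  have hsumch : ∑ y ∈ children hT c ((eqv.symm t : _) : V), (Dset hT c y).card = B + 3 := by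
    have h1 := Dset_card_rec hT c hvtc
    have h2 := (hstep1 _ hvtd).2
    omega
  have htrans : ∑ i ∈ Finset.univ.filter
        (fun i : Fin (3 * m) => (eqv ⟨par hT c (e i), hparmem i⟩) = t), (a i + 1)
      = ∑ y ∈ children hT c ((eqv.symm t : _) : V), (Dset hT c y).card := by
    apply Finset.sum_bij (fun i _ => e i)
    · intro i hi
      have hfi := (Finset.mem_filter.mp hi).2
      have h2 := he2 i
      have hvc : e i ≠ c := fun hq => by rw [hq, SimpleGraph.dist_self] at h2; omega
      exact (mem_children hT c).mpr ⟨hvc, (hfib i).mp hfi⟩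
    · intro i _ j _ hij
      exact hebij.2.1 (by simp) (by simp) hij
    · intro y hy
      obtain ⟨hyne, hypar⟩ := (mem_children hT c).mp hy
      have hyd : G.dist c y = 2 := by
        have := child_dist hT c hy; omega
      have hymem : y ∈ ((Finset.univ.filter (fun v : V => G.dist c v = 2) : Finset V) : Set V) := by
        simp only [Finset.coe_filter, Set.mem_setOf_eq]
        exact ⟨Finset.mem_univ _, hyd⟩
      obtain ⟨i, -, hiy⟩ := hebij.2.2 hymem
      refine ⟨i, Finset.mem_filter.mpr ⟨Finset.mem_univ _, (hfib i).mpr ?_⟩, hiy⟩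
      rw [hiy, hypar]
    · intro i hi
      exact (hecard i).symm
  rw [hsumch] at htrans
  rw [Finset.sum_add_distrib, Finset.sum_const, smul_eq_mul, mul_one] at htrans
  have hk3 : (Finset.univ.filter
      (fun i : Fin (3 * m) => (eqv ⟨par hT c (e i), hparmem i⟩) = t)).card ≤ 3 := by
    by_contra hcon
    push_neg at hcon
    have h1 : ∀ i ∈ Finset.univ.filter
        (fun i : Fin (3 * m) => (eqv ⟨par hT c (e i), hparmem i⟩) = t), B + 1 ≤ 4 * a i :=
      fun i _ => by have := hlow i; omega
    have h2 := Finset.card_nsmul_le_sum _ _ _ h1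
    rw [smul_eq_mul] at h2
    have h3 : 4 * (B + 1) ≤ (Finset.univ.filter
        (fun i : Fin (3 * m) => (eqv ⟨par hT c (e i), hparmem i⟩) = t)).card * (B + 1) :=
      Nat.mul_le_mul_right _ (by omega)
    have h4 := le_trans h3 h2
    have h5 : ∑ i ∈ Finset.univ.filter
        (fun i : Fin (3 * m) => (eqv ⟨par hT c (e i), hparmem i⟩) = t), 4 * a i
        = 4 * ∑ i ∈ Finset.univ.filter
        (fun i : Fin (3 * m) => (eqv ⟨par hT c (e i), hparmem i⟩) = t), a i :=
      (Finset.mul_sum _ _ _).symm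
    omega
  have hk3' : 3 ≤ (Finset.univ.filter
      (fun i : Fin (3 * m) => (eqv ⟨par hT c (e i), hparmem i⟩) = t)).card := by
    by_contra hcon
    push_neg at hcon
    have h1 : ∀ i ∈ Finset.univ.filter
        (fun i : Fin (3 * m) => (eqv ⟨par hT c (e i), hparmem i⟩) = t), 2 * a i ≤ B - 1 :=
      fun i _ => by have := hhigh i; omega
    have h2 := Finset.sum_le_card_nsmul _ _ _ h1
    rw [smul_eq_mul] at h2
    have h3 : (Finset.univ.filter
        (fun i : Fin (3 * m) => (eqv ⟨par hT c (e i), hparmem i⟩) = t)).card * (B - 1)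
        ≤ 2 * (B - 1) :=
      Nat.mul_le_mul_right _ (by omega)
    have h4 := le_trans h2 h3
    have h5 : ∑ i ∈ Finset.univ.filter
        (fun i : Fin (3 * m) => (eqv ⟨par hT c (e i), hparmem i⟩) = t), 2 * a i
        = 2 * ∑ i ∈ Finset.univ.filter
        (fun i : Fin (3 * m) => (eqv ⟨par hT c (e i), hparmem i⟩) = t), a i :=
      (Finset.mul_sum _ _ _).symm
    omega
  have hgoal1 : (Finset.univ.filter
      (fun i : Fin (3 * m) => (eqv ⟨par hT c (e i), hparmem i⟩) = t)).card = 3 := by omega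
  have hgoal2 : ∑ i ∈ Finset.univ.filter
      (fun i : Fin (3 * m) => (eqv ⟨par hT c (e i), hparmem i⟩) = t), a i = B := by omega
  exact ⟨hgoal1, hgoal2⟩
end

section
/- Let G be a finite connected graph on n vertices and v a vertex of G. Then s(v) ≤ n(n − 1)/2, and if s(v) = n(n − 1)/2 then G is isomorphic to the path P_n with v as an endpoint of the path. -/
open Finset

private lemma status_aux_sum_bound {V : Type*} [DecidableEq V] (d : V → ℕ) :
    ∀ (s : Finset V), (∀ u ∈ s, ∀ k ≤ d u, ∃ w ∈ s, d w = k) →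
      2 * ∑ u ∈ s, d u ≤ s.card * (s.card - 1) ∧
      (2 * ∑ u ∈ s, d u = s.card * (s.card - 1) → Set.InjOn d s) := by
  intro s
  induction s using Finset.strongInduction with
  | _ s ih =>
    intro hs
    rcases s.eq_empty_or_nonempty with rfl | hne
    · simp
    obtain ⟨u, hu, hmax⟩ := s.exists_max_image d hne
    set s' := s.erase u with hs'def
    have hss : s' ⊂ s := Finset.erase_ssubset hu
    have hs'hyp : ∀ w ∈ s', ∀ k ≤ d w, ∃ x ∈ s', d x = k := by
      intro w hw k hk
      obtain ⟨x, hx, hdx⟩ := hs w (Finset.mem_of_mem_erase hw) k hk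
      by_cases hxu : x = u
      · have hdu : d u = k := hxu ▸ hdx
        exact ⟨w, hw, le_antisymm (hdu ▸ hmax w (Finset.mem_of_mem_erase hw)) hk⟩
      · exact ⟨x, Finset.mem_erase.2 ⟨hxu, hx⟩, hdx⟩
    have hcard : d u + 1 ≤ s.card := by
      have himg : Finset.range (d u + 1) ⊆ s.image d := by
        intro k hk
        rw [Finset.mem_range] at hk
        obtain ⟨w, hw, hdw⟩ := hs u hu k (Nat.lt_succ_iff.mp hk)
        exact Finset.mem_image.2 ⟨w, hw, hdw⟩
      calc d u + 1 = (Finset.range (d u + 1)).card := by simp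
        _ ≤ (s.image d).card := Finset.card_le_card himg
        _ ≤ s.card := Finset.card_image_le
    have hsum : ∑ x ∈ s, d x = d u + ∑ x ∈ s', d x :=
      (Finset.add_sum_erase s d hu).symm
    have hcard' : s.card = s'.card + 1 := by
      rw [hs'def, Finset.card_erase_of_mem hu]
      omega
    obtain ⟨ihb, ihe⟩ := ih s' hss hs'hyp
    set m := s'.card with hm
    have hdum : d u ≤ m := by omega
    -- the key: if some w ∈ s' has d w = d u and d u = m, contradiction by counting
    have hkey : d u = m → ∀ w ∈ s', d w ≠ d u := by
      intro hdm w hw hdw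
      have himg : Finset.range (m + 1) ⊆ s'.image d := by
        intro k hk
        rw [Finset.mem_range] at hk
        obtain ⟨x, hx, hdx⟩ := hs'hyp w hw k (by omega)
        exact Finset.mem_image.2 ⟨x, hx, hdx⟩
      have : m + 1 ≤ m := by
        calc m + 1 = (Finset.range (m + 1)).card := by simp
          _ ≤ (s'.image d).card := Finset.card_le_card himg
          _ ≤ s'.card := Finset.card_image_le
      omega
    rcases Nat.eq_zero_or_pos m with hm0 | hmpos
    · -- s' empty, s = {u}
      have hs'e : s' = ∅ := Finset.card_eq_zero.mp hm0
      have hdu0 : d u = 0 := by omega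
      constructor
      · rw [hsum, hs'e, hcard']
        simp [hdu0, hm0]
      · intro _ a ha b hb _
        have hsu : s = {u} := by
          have := Finset.insert_erase hu
          rw [← hs'def] at this
          rw [← this, hs'e]; rfl
        rw [hsu] at ha hb
        simp only [Finset.coe_singleton, Set.mem_singleton_iff] at ha hb
        rw [ha, hb]
    · have hmul : (m + 1) * m = m * (m - 1) + 2 * m := by
        cases m with
        | zero => omega
        | succ k => simp only [Nat.add_sub_cancel]; ring
      have hb2 : 2 * ∑ x ∈ s, d x ≤ s.card * (s.card - 1) := by
        rw [hsum, hcard']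
        simp only [Nat.add_sub_cancel]
        omega
      refine ⟨hb2, ?_⟩
      intro heq
      rw [hsum, hcard'] at heq
      simp only [Nat.add_sub_cancel] at heq
      have hdu : d u = m := by omega
      have hs'eq : 2 * ∑ x ∈ s', d x = m * (m - 1) := by omega
      have hinj' : Set.InjOn d s' := ihe hs'eq
      intro a ha b hb hab
      by_cases hau : a = u
      · by_cases hbu : b = u
        · rw [hau, hbu]
        · exact absurd (hau ▸ hab.symm)
            (hkey hdu b (Finset.mem_erase.2 ⟨hbu, hb⟩))
      · by_cases hbu : b = u
        · exact absurd (hbu ▸ hab)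
            (hkey hdu a (Finset.mem_erase.2 ⟨hau, ha⟩))
        · exact hinj' (Finset.mem_coe.2 (Finset.mem_erase.2 ⟨hau, ha⟩))
            (Finset.mem_coe.2 (Finset.mem_erase.2 ⟨hbu, hb⟩)) hab

private lemma status_aux_exists_adj {V : Type*} {G : SimpleGraph V}
    (hG : G.Connected) (v u : V) (h : G.dist v u ≠ 0) :
    ∃ x, G.Adj x u ∧ G.dist v x + 1 = G.dist v u := by
  obtain ⟨p, hp⟩ := (hG u v).exists_walk_length_eq_dist
  cases p with
  | nil =>
    simp only [SimpleGraph.Walk.length_nil] at hp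
    rw [SimpleGraph.dist_comm] at h
    omega
  | @cons _ x _ hadj q =>
    refine ⟨x, hadj.symm, ?_⟩
    have h1 : G.dist v x ≤ q.length := by
      rw [SimpleGraph.dist_comm]
      exact SimpleGraph.dist_le q
    have h2 : G.dist v u ≤ G.dist v x + G.dist x u :=
      hG.dist_triangle
    have h3 : G.dist x u = 1 :=
      SimpleGraph.dist_eq_one_iff_adj.2 hadj.symm
    have h4 : q.length + 1 = G.dist v u := by
      rw [SimpleGraph.dist_comm]
      simpa using hp
    omega

private lemma status_aux_exists_eq_dist {V : Type*} {G : SimpleGraph V}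
    (hG : G.Connected) (v : V) :
    ∀ m u, G.dist v u = m → ∀ k ≤ m, ∃ w, G.dist v w = k := by
  intro m
  induction m with
  | zero => intro u hu k hk; exact ⟨u, by omega⟩
  | succ m ihm =>
    intro u hu k hk
    rcases Nat.lt_or_ge k (m + 1) with hk' | hk'
    · obtain ⟨x, _, hx⟩ := status_aux_exists_adj hG v u (by omega)
      exact ihm x (by omega) k (by omega)
    · exact ⟨u, by omega⟩

/-- In a finite connected graph `G` on `n` vertices, every vertex `v` satisfies
`s(v) ≤ n(n-1)/2`; and if `s(v) = n(n-1)/2` then `G` is isomorphic to the path `P_n` with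
`v` mapped to an endpoint of the path. -/
theorem status_le_and_eq_iff_path {V : Type*} [Fintype V]
    (G : SimpleGraph V) (hG : G.Connected) (v : V) :
    G.status v ≤ Fintype.card V * (Fintype.card V - 1) / 2 ∧
    (G.status v = Fintype.card V * (Fintype.card V - 1) / 2 →
      ∃ e : G ≃g SimpleGraph.pathGraph (Fintype.card V),
        (e v : ℕ) = 0 ∨ (e v : ℕ) = Fintype.card V - 1) := by
  classical
  set n := Fintype.card V with hn
  set d : V → ℕ := fun u => G.dist v u with hd
  have hhyp : ∀ u ∈ (Finset.univ : Finset V), ∀ k ≤ d u,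
      ∃ w ∈ (Finset.univ : Finset V), d w = k := by
    intro u _ k hk
    obtain ⟨w, hw⟩ := status_aux_exists_eq_dist hG v (d u) u rfl k hk
    exact ⟨w, Finset.mem_univ w, hw⟩
  obtain ⟨hb, he⟩ := status_aux_sum_bound d Finset.univ hhyp
  rw [Finset.card_univ, ← hn] at hb he
  have hstat : G.status v = ∑ u : V, d u := rfl
  have heven : 2 ∣ n * (n - 1) := by
    rcases Nat.even_or_odd n with h | h
    · exact Dvd.dvd.mul_right h.two_dvd _
    · rcases n with _ | k
      · simp
      · have : Even (k + 1 - 1) := by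
          simpa using Nat.Odd.sub_odd h odd_one
        exact Dvd.dvd.mul_left this.two_dvd _
  constructor
  · rw [hstat, Nat.le_div_iff_mul_le (by norm_num : 0 < 2)]
    omega
  · intro heq
    rw [hstat] at heq
    have h2eq : 2 * ∑ u : V, d u = n * (n - 1) := by
      obtain ⟨c, hc⟩ := heven
      omega
    have hinj : Function.Injective d := by
      have := he h2eq
      intro a b hab
      exact this (by simp) (by simp) hab
    have hlt : ∀ u, d u < n := by
      intro u
      have himg : Finset.range (d u + 1) ⊆ Finset.univ.image d := by
        intro k hk
        rw [Finset.mem_range] at hk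
        obtain ⟨w, _, hdw⟩ := hhyp u (Finset.mem_univ u) k (Nat.lt_succ_iff.mp hk)
        exact Finset.mem_image.2 ⟨w, Finset.mem_univ w, hdw⟩
      have : d u + 1 ≤ n := by
        calc d u + 1 = (Finset.range (d u + 1)).card := by simp
          _ ≤ (Finset.univ.image d).card := Finset.card_le_card himg
          _ ≤ (Finset.univ : Finset V).card := Finset.card_image_le
          _ = n := Finset.card_univ
      omega
    set f : V → Fin n := fun u => ⟨d u, hlt u⟩ with hf
    have hfinj : Function.Injective f := by
      intro a b hab
      exact hinj (congrArg Fin.val hab)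
    have hfbij : Function.Bijective f :=
      (Fintype.bijective_iff_injective_and_card f).2 ⟨hfinj, by simp [hn]⟩
    set e0 : V ≃ Fin n := Equiv.ofBijective f hfbij with he0
    have hmapiff : ∀ a b : V,
        (SimpleGraph.pathGraph n).Adj (e0 a) (e0 b) ↔ G.Adj a b := by
      intro a b
      rw [SimpleGraph.pathGraph_adj]
      have hea : ((e0 a : Fin n) : ℕ) = d a := rfl
      have heb : ((e0 b : Fin n) : ℕ) = d b := rfl
      rw [hea, heb]
      constructor
      · rintro (h | h)
        · -- d a + 1 = d b, so b has a neighbor at distance d a, which must be a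
          have hne : G.dist v b ≠ 0 := by
            have hdb : d b = G.dist v b := rfl
            omega
          obtain ⟨x, hadj, hx⟩ := status_aux_exists_adj hG v b hne
          have hxa : x = a := by
            apply hinj
            show d x = d a
            have h1 : d x = G.dist v x := rfl
            have h2 : d b = G.dist v b := rfl
            omega
          exact hxa ▸ hadj
        · have hne : G.dist v a ≠ 0 := by
            have hda : d a = G.dist v a := rfl
            omega
          obtain ⟨x, hadj, hx⟩ := status_aux_exists_adj hG v a hne
          have hxb : x = b := by
            apply hinj
            show d x = d b
            have h1 : d x = G.dist v x := rfl
            have h2 : d a = G.dist v a := rfl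
            omega
          exact (hxb ▸ hadj).symm
      · intro hadj
        have hab : d a ≠ d b := fun h => hadj.ne (hinj h)
        have h1 : G.dist a b = 1 := SimpleGraph.dist_eq_one_iff_adj.2 hadj
        have h2 : G.dist b a = 1 := SimpleGraph.dist_eq_one_iff_adj.2 hadj.symm
        have h3 : d b ≤ d a + G.dist a b := hG.dist_triangle
        have h4 : d a ≤ d b + G.dist b a := hG.dist_triangle
        omega
    refine ⟨⟨e0, fun {a b} => hmapiff a b⟩, Or.inl ?_⟩
    show ((e0 v : Fin n) : ℕ) = 0
    have : d v = 0 := by simp [hd]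
    exact this
end

section
/- Paths are status unique in the family of all connected graphs: if H is a finite connected graph whose status sequence (multiset of statuses) equals the status sequence of the path P_n, then H is isomorphic to P_n. -/
open Finset Function SimpleGraph

section PairCounting

variable {α β : Type*} [Fintype α]

lemma two_mul_card_lt_pairs [LinearOrder β] (f : α → β) :
    2 * #{p : α × α | f p.1 < f p.2} = #{p : α × α | f p.1 ≠ f p.2} := by
  classical
  have hswap : #{p : α × α | f p.2 < f p.1} = #{p : α × α | f p.1 < f p.2} :=
    card_equiv (Equiv.prodComm α α) (by simp)
  rw [two_mul]
  nth_rw 2 [← hswap]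
  rw [← card_union_of_disjoint (disjoint_filter.2 fun _ _ h h' => lt_asymm h h'), ← filter_or]
  simp only [ne_iff_lt_or_gt]

lemma injective_of_mul_pred_le_card_ne_pairs [DecidableEq β] (f : α → β)
    (h : Fintype.card α * (Fintype.card α - 1) ≤ #{p : α × α | f p.1 ≠ f p.2}) :
    Injective f := by
  classical
  have hsub : ({p : α × α | f p.1 ≠ f p.2} : Finset (α × α)) ⊆ univ.offDiag := fun p hp => by
    simp only [mem_filter, mem_offDiag] at hp ⊢
    exact ⟨mem_univ _, mem_univ _, fun h => hp.2 (congrArg f h)⟩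
  have heq := eq_of_subset_of_card_le hsub <| by
    rwa [offDiag_card, card_univ, ← Nat.mul_sub_one]
  intro a b hab
  by_contra hne
  have : (a, b) ∈ ({p : α × α | f p.1 ≠ f p.2} : Finset _) := heq ▸ by simp [hne]
  exact (mem_filter.1 this).2 hab

lemma le_card_lt_of_forall_lt_exists {f : α → ℕ} (hf : ∀ a, ∀ k < f a, ∃ b, f b = k) (a : α) :
    f a ≤ #{b | f b < f a} := by
  have hsub : range (f a) ⊆ image f {b | f b < f a} := fun k hk => by
    obtain ⟨b, rfl⟩ := hf a k (mem_range.1 hk)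
    exact mem_image_of_mem f (by simpa using hk)
  simpa using (card_le_card hsub).trans card_image_le

lemma sum_le_card_lt_pairs {f : α → ℕ} (hf : ∀ a, ∀ k < f a, ∃ b, f b = k) :
    ∑ a, f a ≤ #{p : α × α | f p.1 < f p.2} := by
  calc ∑ a, f a ≤ ∑ a, #{b | f b < f a} :=
        sum_le_sum fun a _ => le_card_lt_of_forall_lt_exists hf a
    _ = #{p : α × α | f p.1 < f p.2} := by
      simp only [card_filter, Fintype.sum_prod_type_right]

lemma injective_of_two_mul_sum_eq {f : α → ℕ} (hf : ∀ a, ∀ k < f a, ∃ b, f b = k)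
    (h : 2 * ∑ a, f a = Fintype.card α * (Fintype.card α - 1)) : Injective f := by
  refine injective_of_mul_pred_le_card_ne_pairs f ?_
  rw [← h, ← two_mul_card_lt_pairs]
  exact Nat.mul_le_mul_left 2 (sum_le_card_lt_pairs hf)

end PairCounting

namespace SimpleGraph

variable {V : Type*} {G : SimpleGraph V}

lemma dist_le_dist_add_one_of_adj {u v w : V} (h : G.Adj v w) : G.dist u w ≤ G.dist u v + 1 := by
  rcases h.diff_dist_adj (u := u) with h | h | h <;> omega

lemma Walk.le_add_length {g : V → ℕ} (hg : ∀ a b, G.Adj a b → g b ≤ g a + 1) {u w : V}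
    (p : G.Walk u w) : g w ≤ g u + p.length := by
  induction p with
  | nil => simp
  | cons h _ ih =>
    have := hg _ _ h
    rw [Walk.length_cons]
    omega

lemma exists_adj_dist_add_one_eq {u w : V} (h : G.dist u w ≠ 0) :
    ∃ x, G.Adj x w ∧ G.dist u x + 1 = G.dist u w := by
  obtain ⟨p, hp⟩ := (Reachable.of_dist_ne_zero h).symm.exists_walk_length_eq_dist
  cases p with
  | nil => simp at h
  | cons hadj r =>
    refine ⟨_, hadj.symm, ?_⟩
    have hr := dist_le r
    have hle := dist_le_dist_add_one_of_adj (u := u) hadj.symm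
    rw [Walk.length_cons, dist_comm] at hp
    rw [dist_comm] at hr
    omega

lemma exists_dist_eq_of_le {u w : V} {k : ℕ} (hk : k ≤ G.dist u w) : ∃ x, G.dist u x = k := by
  obtain ⟨d, hd⟩ : ∃ d, G.dist u w = d := ⟨_, rfl⟩
  induction d generalizing w with
  | zero => exact ⟨w, by omega⟩
  | succ d ih =>
    rcases hk.eq_or_lt with hk | hk
    · exact ⟨w, hk.symm⟩
    · obtain ⟨x, -, hx⟩ := exists_adj_dist_add_one_eq (show G.dist u w ≠ 0 by omega)
      exact ih (w := x) (by omega) (by omega)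

lemma adj_iff_dist_add_one_eq_of_injective {v : V} (hv : Injective (G.dist v)) {a b : V} :
    G.Adj a b ↔ G.dist v a + 1 = G.dist v b ∨ G.dist v b + 1 = G.dist v a := by
  constructor
  · intro hab
    have := dist_le_dist_add_one_of_adj (u := v) hab
    have := dist_le_dist_add_one_of_adj (u := v) hab.symm
    have : G.dist v a ≠ G.dist v b := hv.ne hab.ne
    omega
  · rintro (h | h)
    · obtain ⟨x, hx, hxa⟩ := exists_adj_dist_add_one_eq (show G.dist v b ≠ 0 by omega)
      exact hv (hxa.trans h.symm |> Nat.succ_injective) ▸ hx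
    · obtain ⟨x, hx, hxb⟩ := exists_adj_dist_add_one_eq (show G.dist v a ≠ 0 by omega)
      exact (hv (hxb.trans h.symm |> Nat.succ_injective) ▸ hx).symm

lemma Connected.dist_lt_card [Fintype V] (hG : G.Connected) (u w : V) :
    G.dist u w < Fintype.card V := by
  obtain ⟨p, hp, hlen⟩ := hG.exists_path_of_dist u w
  exact hlen ▸ hp.length_lt

noncomputable def Connected.isoPathGraphOfInjectiveDist [Fintype V] (hG : G.Connected) {v : V}
    (hv : Injective (G.dist v)) : G ≃g pathGraph (Fintype.card V) where
  toEquiv := .ofBijective (fun u => ⟨G.dist v u, hG.dist_lt_card v u⟩)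
    ((Fintype.bijective_iff_injective_and_card _).2
      ⟨fun _ _ h => hv (congrArg Fin.val h), Fintype.card_fin _ |>.symm⟩)
  map_rel_iff' := by
    intro a b
    rw [pathGraph_adj, adj_iff_dist_add_one_eq_of_injective hv]
    rfl

lemma injective_dist_of_two_mul_status_eq [Fintype V] {v : V}
    (h : 2 * G.status v = Fintype.card V * (Fintype.card V - 1)) : Injective (G.dist v) :=
  injective_of_two_mul_sum_eq (fun _ _ hk => exists_dist_eq_of_le hk.le) h

lemma pathGraph_dist_zero (n : ℕ) (j : Fin (n + 1)) : (pathGraph (n + 1)).dist 0 j = j := by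
  refine le_antisymm ?_ ?_
  · obtain ⟨j, hj⟩ := j
    induction j with
    | zero => simp
    | succ j ih =>
      have hadj : (pathGraph (n + 1)).Adj ⟨j, by omega⟩ ⟨j + 1, hj⟩ := by
        simp [pathGraph_adj]
      exact (dist_le_dist_add_one_of_adj hadj).trans (by simpa using ih (by omega))
  · obtain ⟨p, hp⟩ := (pathGraph_connected n).exists_walk_length_eq_dist 0 j
    simpa [hp] using p.le_add_length (g := Fin.val) fun a b h => by
      rw [pathGraph_adj] at h
      omega

lemma two_mul_pathGraph_status_zero (n : ℕ) :
    2 * (pathGraph (n + 1)).status 0 = (n + 1) * n := by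
  rw [status, Fintype.sum_congr _ _ (pathGraph_dist_zero n),
    Fin.sum_univ_eq_sum_range (· : ℕ → ℕ), mul_comm, sum_range_id_mul_two, Nat.add_sub_cancel]

end SimpleGraph

/-- Paths are status unique among all connected graphs: a finite connected graph with the
same status sequence (multiset of statuses) as the path `P_n` is isomorphic to `P_n`. -/
theorem path_status_unique {V : Type*} [Fintype V]
    (H : SimpleGraph V) (hH : H.Connected) (n : ℕ)
    (hseq : H.statusSequence = (SimpleGraph.pathGraph n).statusSequence) :
    Nonempty (H ≃g SimpleGraph.pathGraph n) := by
  have hcard : Fintype.card V = n := by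
    simpa [statusSequence] using congrArg Multiset.card hseq
  have : Nonempty V := hH.nonempty
  obtain ⟨m, rfl⟩ := Nat.exists_eq_add_one_of_ne_zero (hcard ▸ Fintype.card_ne_zero)
  have hend : (pathGraph (m + 1)).status 0 ∈ H.statusSequence :=
    hseq ▸ Multiset.mem_map_of_mem _ (mem_univ_val 0)
  obtain ⟨v, -, hv⟩ := Multiset.mem_map.1 hend
  have hstatus : 2 * H.status v = Fintype.card V * (Fintype.card V - 1) := by
    rw [hv, two_mul_pathGraph_status_zero, hcard, Nat.add_sub_cancel]
  exact ⟨hcard ▸ hH.isoPathGraphOfInjectiveDist (injective_dist_of_two_mul_status_eq hstatus)⟩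
end

section
/- In a finite tree T with at least two vertices, every vertex whose status is maximum among all vertices of T is a leaf (a vertex of degree one). -/
open SimpleGraph Finset

/-- If `w` is adjacent to `v`, any walk from `w` to `u` of length `< dist v u + 1`
avoids `v`. -/
private lemma notMem_support_aux {V : Type*} (G : SimpleGraph V)
    {v w u : V} (h : G.Adj v w) (q : G.Walk w u) (hq : q.length < G.dist v u + 1) :
    v ∉ q.support := by
  classical
  intro hv
  have hsplit := congrArg SimpleGraph.Walk.length (q.take_spec hv)
  rw [SimpleGraph.Walk.length_append] at hsplit
  have h1 : G.dist w v ≤ (q.takeUntil v hv).length := SimpleGraph.dist_le _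
  have h2 : G.dist v u ≤ (q.dropUntil v hv).length := SimpleGraph.dist_le _
  have hwv : G.dist w v = 1 := SimpleGraph.dist_eq_one_iff_adj.mpr h.symm
  omega

/-- In a tree, distances to a fixed vertex from two adjacent vertices are never equal. -/
private lemma dist_ne_of_adj {V : Type*} {G : SimpleGraph V} (hT : G.IsTree)
    {v w : V} (h : G.Adj v w) (u : V) : G.dist w u ≠ G.dist v u := by
  have hconn := hT.isConnected
  intro heq
  by_cases hvu : v = u
  · subst hvu
    rw [SimpleGraph.dist_self] at heq
    have : G.dist w v = 1 := SimpleGraph.dist_eq_one_iff_adj.mpr h.symm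
    omega
  · obtain ⟨p, hp, hpl⟩ := hconn.exists_path_of_dist v u
    obtain ⟨q, hq, hql⟩ := hconn.exists_path_of_dist w u
    have hvq : v ∉ q.support := notMem_support_aux G h q (by omega)
    have hcons : (SimpleGraph.Walk.cons h q).IsPath := hq.cons hvq
    have := (hT.existsUnique_path v u).unique hp hcons
    have hlen := congrArg SimpleGraph.Walk.length this
    rw [SimpleGraph.Walk.length_cons] at hlen
    omega

/-- For adjacent `v w` in a tree, distances from `w` are `dist v · ∓ 1`. -/
private lemma dist_step {V : Type*} {G : SimpleGraph V} (hT : G.IsTree)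
    {v w : V} (h : G.Adj v w) (u : V) :
    (G.dist w u + 1 = G.dist v u) ∨ (G.dist w u = G.dist v u + 1) := by
  have hconn := hT.isConnected
  have h1 : G.dist w u ≤ G.dist w v + G.dist v u := hconn.dist_triangle
  have h2 : G.dist v u ≤ G.dist v w + G.dist w u := hconn.dist_triangle
  have hwv : G.dist w v = 1 := SimpleGraph.dist_eq_one_iff_adj.mpr h.symm
  have hvw : G.dist v w = 1 := SimpleGraph.dist_eq_one_iff_adj.mpr h
  have hne := dist_ne_of_adj hT h u
  omega

/-- Key counting identity: for `w` adjacent to `v` in a tree,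
`status w + 2·#{u : dist w u + 1 = dist v u} = status v + card V`. -/
private lemma status_adj_eq {V : Type*} [Fintype V] {G : SimpleGraph V} (hT : G.IsTree)
    {v w : V} (h : G.Adj v w) :
    G.status w + 2 * (univ.filter (fun u => G.dist w u + 1 = G.dist v u)).card
      = G.status v + Fintype.card V := by
  classical
  set A := univ.filter (fun u => G.dist w u + 1 = G.dist v u) with hA
  have hsum1 : ∑ u ∈ A, G.dist w u + A.card = ∑ u ∈ A, G.dist v u := by
    rw [Finset.card_eq_sum_ones, ← Finset.sum_add_distrib]
    exact Finset.sum_congr rfl fun u hu => (Finset.mem_filter.mp hu).2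
  have hsum2 : ∑ u ∈ Aᶜ, G.dist w u = ∑ u ∈ Aᶜ, G.dist v u + Aᶜ.card := by
    rw [Finset.card_eq_sum_ones, ← Finset.sum_add_distrib]
    refine Finset.sum_congr rfl fun u hu => ?_
    have hu' : ¬ (G.dist w u + 1 = G.dist v u) := by
      simpa [hA] using (Finset.mem_compl.mp hu)
    rcases dist_step hT h u with h' | h'
    · exact absurd h' hu'
    · exact h'
  have hcard : A.card + Aᶜ.card = Fintype.card V := by
    simp [Finset.card_add_card_compl A]
  have hsplit1 : G.status w = ∑ u ∈ A, G.dist w u + ∑ u ∈ Aᶜ, G.dist w u := by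
    rw [SimpleGraph.status, ← Finset.sum_add_sum_compl A]
  have hsplit2 : G.status v = ∑ u ∈ A, G.dist v u + ∑ u ∈ Aᶜ, G.dist v u := by
    rw [SimpleGraph.status, ← Finset.sum_add_sum_compl A]
  omega

/-- In a finite tree with at least two vertices, every vertex of maximum status is a leaf,
i.e. has degree one. -/
theorem maxStatus_is_leaf {V : Type*} [Fintype V]
    (G : SimpleGraph V) [DecidableRel G.Adj] (hT : G.IsTree)
    (hcard : 2 ≤ Fintype.card V)
    (v : V) (hmax : ∀ u : V, G.status u ≤ G.status v) :
    G.degree v = 1 := by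
  classical
  have hconn := hT.isConnected
  -- degree is positive
  have hpos : 0 < G.degree v := by
    rw [SimpleGraph.degree_pos_iff_exists_adj]
    obtain ⟨u, hu⟩ := Fintype.exists_ne_of_one_lt_card (by omega) v
    have hd : G.dist v u ≠ 0 := by
      rw [SimpleGraph.dist_ne_zero_iff_ne_and_reachable]
      exact ⟨hu.symm, hconn.1 v u⟩
    obtain ⟨p, hp⟩ := SimpleGraph.exists_walk_of_dist_ne_zero hd
    have hnil : ¬ p.Nil := by
      intro hn
      rw [SimpleGraph.Walk.nil_iff_length_eq] at hn
      omega
    exact ⟨p.getVert 1, p.adj_snd hnil⟩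
  -- degree is at most one
  by_contra hne
  have h2 : 2 ≤ G.degree v := by omega
  rw [SimpleGraph.degree] at h2
  obtain ⟨w₁, hw₁, w₂, hw₂, hww⟩ := Finset.one_lt_card.mp h2
  rw [SimpleGraph.mem_neighborFinset] at hw₁ hw₂
  set A₁ := univ.filter (fun u => G.dist w₁ u + 1 = G.dist v u) with hA₁
  set A₂ := univ.filter (fun u => G.dist w₂ u + 1 = G.dist v u) with hA₂
  have hkey₁ := status_adj_eq hT hw₁
  have hkey₂ := status_adj_eq hT hw₂
  rw [← hA₁] at hkey₁
  rw [← hA₂] at hkey₂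
  have hge₁ : Fintype.card V ≤ 2 * A₁.card := by
    have := hmax w₁; omega
  have hge₂ : Fintype.card V ≤ 2 * A₂.card := by
    have := hmax w₂; omega
  -- A₁ and A₂ are disjoint
  have hdisj : Disjoint A₁ A₂ := by
    rw [Finset.disjoint_left]
    intro u hu₁ hu₂
    have h₁ : G.dist w₁ u + 1 = G.dist v u := (Finset.mem_filter.mp hu₁).2
    have h₂ : G.dist w₂ u + 1 = G.dist v u := (Finset.mem_filter.mp hu₂).2
    obtain ⟨q₁, hq₁, hql₁⟩ := hconn.exists_path_of_dist w₁ u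
    obtain ⟨q₂, hq₂, hql₂⟩ := hconn.exists_path_of_dist w₂ u
    have hv₁ : v ∉ q₁.support := notMem_support_aux G hw₁ q₁ (by omega)
    have hv₂ : v ∉ q₂.support := notMem_support_aux G hw₂ q₂ (by omega)
    have hc₁ : (SimpleGraph.Walk.cons hw₁ q₁).IsPath := hq₁.cons hv₁
    have hc₂ : (SimpleGraph.Walk.cons hw₂ q₂).IsPath := hq₂.cons hv₂
    have heq := (hT.existsUnique_path v u).unique hc₁ hc₂
    have := congrArg (fun p => SimpleGraph.Walk.getVert p 1) heq
    simp only [SimpleGraph.Walk.getVert_cons_succ, SimpleGraph.Walk.getVert_zero] at this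
    exact hww this
  -- v belongs to neither
  have hv₁ : v ∉ A₁ := by
    simp only [hA₁, Finset.mem_filter, Finset.mem_univ, true_and]
    rw [SimpleGraph.dist_self]
    omega
  have hv₂ : v ∉ A₂ := by
    simp only [hA₂, Finset.mem_filter, Finset.mem_univ, true_and]
    rw [SimpleGraph.dist_self]
    omega
  have hsub : A₁ ∪ A₂ ⊆ univ.erase v := by
    intro u hu
    rw [Finset.mem_erase]
    rcases Finset.mem_union.mp hu with h | h
    · exact ⟨fun he => hv₁ (he ▸ h), Finset.mem_univ u⟩
    · exact ⟨fun he => hv₂ (he ▸ h), Finset.mem_univ u⟩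
  have hcu : A₁.card + A₂.card ≤ Fintype.card V - 1 := by
    calc A₁.card + A₂.card = (A₁ ∪ A₂).card := (Finset.card_union_of_disjoint hdisj).symm
    _ ≤ (univ.erase v).card := Finset.card_le_card hsub
    _ = Fintype.card V - 1 := by rw [Finset.card_erase_of_mem (Finset.mem_univ v), Finset.card_univ]
  omega
end
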